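/- arXiv:math/0505330 — 7 statements merged into one kernel-verified Lean document; each statement's English description precedes it below -/
import Mathlib

section
/- The function ∂^k : ℕ → ℕ is nondecreasing for every k ≥ 1, i.e., if m ≤ n then ∂^k(m) ≤ ∂^k(n). -/
/-- The largest `m` with `C(m, k) ≤ n` (the leading term of the greedy cascade
representation). -/
def cascadeTop (k n : ℕ) : ℕ := Nat.findGreatest (fun m => Nat.choose m k ≤ n) (n + k + 1)

/-- `delSym k n = ∂^k(n)`: for `n > 0` with `k`-cascade representation
`n = C(n_k, k) + ... + C(n_i, i)` (computed greedily), `∂^k(n) = C(n_k - 1, k - 1)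
+ ... + C(n_i - 1, i - 1)`, and `∂^k(0) = 0`. -/
def delSym : ℕ → ℕ → ℕ
  | _, 0 => 0
  | 0, _ + 1 => 1
  | k + 1, n + 1 =>
    Nat.choose (cascadeTop (k + 1) (n + 1) - 1) k +
      delSym k (n + 1 - Nat.choose (cascadeTop (k + 1) (n + 1)) (k + 1))

/-- Auxiliary for Kruskal–Katona shadow: `delKKaux k n` is
`C(n_k, k-1) + ... + C(n_i, i-1)` for the `k`-cascade representation of `n`. -/
def delKKaux : ℕ → ℕ → ℕ
  | _, 0 => 0
  | 0, _ + 1 => 1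
  | k + 1, n + 1 =>
    Nat.choose (cascadeTop (k + 1) (n + 1)) k +
      delKKaux k (n + 1 - Nat.choose (cascadeTop (k + 1) (n + 1)) (k + 1))

/-- `delKK k n = ∂_k(n)`, computed via the `(k+1)`-cascade representation of `n`. -/
def delKK (k n : ℕ) : ℕ := delKKaux (k + 1) n

/-- Lower bound for binomial coefficients: for `1 ≤ k ≤ m`, `m + 1 ≤ k + C(m,k)`. -/
lemma choose_lower : ∀ k m : ℕ, 1 ≤ k → k ≤ m → m + 1 ≤ k + m.choose k
  | 0, _, h, _ => absurd h (by simp)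
  | 1, m, _, _ => by simp [Nat.choose_one_right]
  | k+2, m, _, hm => by
    obtain ⟨m, rfl⟩ : ∃ m', m = m' + 1 := ⟨m - 1, by omega⟩
    have h := choose_lower (k+1) m (by omega) (by omega)
    rw [Nat.choose_succ_succ]
    omega

lemma cascadeTop_spec (k n : ℕ) (hk : 1 ≤ k) : (cascadeTop k n).choose k ≤ n := by
  have h0 : Nat.choose 0 k ≤ n := by
    rw [Nat.choose_eq_zero_of_lt hk]; omega
  exact Nat.findGreatest_spec (P := fun m => Nat.choose m k ≤ n) (Nat.zero_le _) h0

lemma le_cascadeTop (k n m : ℕ) (hk : 1 ≤ k) (h : m.choose k ≤ n) : m ≤ cascadeTop k n := by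
  have hb : m ≤ n + k + 1 := by
    rcases le_or_gt m k with h' | h'
    · omega
    · have := choose_lower k m hk (by omega)
      omega
  exact Nat.le_findGreatest hb h

lemma cascadeTop_lt (k n m : ℕ) (hk : 1 ≤ k) (h : cascadeTop k n < m) : n < m.choose k := by
  by_contra hc
  push_neg at hc
  exact absurd (le_cascadeTop k n m hk hc) (by omega)

lemma cascadeTop_eq (k n t : ℕ) (hk : 1 ≤ k) (h1 : t.choose k ≤ n)
    (h2 : n < (t+1).choose k) : cascadeTop k n = t := by
  have h3 := le_cascadeTop k n t hk h1
  have h4 : cascadeTop k n < t + 1 := by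
    by_contra h
    push_neg at h
    have hs := cascadeTop_spec k n hk
    have := Nat.choose_le_choose k h
    omega
  omega

lemma cascadeTop_one (n : ℕ) : cascadeTop 1 n = n :=
  cascadeTop_eq 1 n n le_rfl (by simp) (by simp)

lemma delSym_one_le (m : ℕ) : delSym 1 m ≤ 1 := by
  rcases m with _ | m
  · simp [delSym]
  · rw [delSym, cascadeTop_one]
    simp [delSym]

/-- `∂^k(C(t,k) - 1) ≤ C(t-1, k-1)`. -/
lemma delSym_choose_pred : ∀ k t : ℕ, delSym (k+1) (t.choose (k+1) - 1) ≤ (t-1).choose k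
  | 0, t => by
    have := delSym_one_le (t.choose 1 - 1)
    simpa using this
  | k+1, t => by
    rcases le_or_gt t (k+2) with ht | ht
    · -- C(t,k+2) ≤ 1, so the argument is 0
      have : t.choose (k+2) ≤ 1 := by
        rcases eq_or_lt_of_le ht with rfl | h
        · simp
        · rw [Nat.choose_eq_zero_of_lt h]; omega
      have hz : t.choose (k+2) - 1 = 0 := by omega
      rw [hz]
      simp [delSym]
    · -- t ≥ k+3
      obtain ⟨s, rfl⟩ : ∃ s, t = s + 2 := ⟨t - 2, by omega⟩
      have hpas : (s+2).choose (k+2) = (s+1).choose (k+1) + (s+1).choose (k+2) :=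
        Nat.choose_succ_succ _ _
      have h1 : 1 ≤ (s+1).choose (k+1) := Nat.choose_pos (by omega)
      have h2 : 1 ≤ (s+1).choose (k+2) := Nat.choose_pos (by omega)
      set n := (s+2).choose (k+2) - 1 with hn
      have hct : cascadeTop (k+2) n = s + 1 := by
        apply cascadeTop_eq _ _ _ (by omega)
        · omega
        · have : s + 1 + 1 = s + 2 := rfl
          rw [this]
          omega
      obtain ⟨m, hm⟩ : ∃ m, n = m + 1 := ⟨n - 1, by omega⟩
      rw [hm, delSym, ← hm, hct]
      have harg : n - (s+1).choose (k+2) = (s+1).choose (k+1) - 1 := by omega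
      rw [harg]
      have hIH := delSym_choose_pred k (s+1)
      have h21 : s + 2 - 1 = s + 1 := rfl
      rw [h21]
      simp only [Nat.add_sub_cancel] at hIH ⊢
      have hpas2 : (s+1).choose (k+1) = s.choose k + s.choose (k+1) :=
        Nat.choose_succ_succ _ _
      omega

lemma delSym_le_succ : ∀ k n : ℕ, delSym k n ≤ delSym k (n+1)
  | 0, n => by rcases n with _ | n <;> simp [delSym]
  | k+1, n => by
    set t := cascadeTop (k+1) (n+1) with htdef
    have hspec : t.choose (k+1) ≤ n + 1 := cascadeTop_spec (k+1) (n+1) (by omega)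
    have htk : k + 1 ≤ t := le_cascadeTop (k+1) (n+1) (k+1) (by omega) (by simp)
    rcases le_or_gt (t.choose (k+1)) n with hle | hgt
    · -- same leading term
      have hpos : 1 ≤ t.choose (k+1) := Nat.choose_pos htk
      obtain ⟨m, rfl⟩ : ∃ m, n = m + 1 := ⟨n - 1, by omega⟩
      have hct : cascadeTop (k+1) (m+1) = t := by
        apply cascadeTop_eq _ _ _ (by omega) hle
        have := cascadeTop_lt (k+1) (m+1+1) (t+1) (by omega) (by omega)
        omega
      rw [delSym, delSym, hct, ← htdef]
      have harg : m + 2 - t.choose (k+1) = (m + 1 - t.choose (k+1)) + 1 := by omega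
      rw [harg]
      exact Nat.add_le_add_left (delSym_le_succ k _) _
    · -- C(t,k+1) = n+1 exactly
      have heq : t.choose (k+1) = n + 1 := by omega
      rw [delSym, ← htdef, heq]
      simp only [Nat.sub_self, delSym]
      have := delSym_choose_pred k t
      rw [heq] at this
      simpa using this

/-- The function ∂^k is nondecreasing for every k ≥ 1. -/
theorem delSym_monotone (k : ℕ) (hk : 1 ≤ k) : Monotone (delSym k) :=
  monotone_nat_of_le_succ (delSym_le_succ k)
end

section
/- For every k > 0, every r < k, and all nonnegative integers n_0, ..., n_{r+1} (with n_{r+1} := 0 if needed), ∂^k(n_0 + n_1 + ... + n_r) ≤ Σ_{i=0}^{r} max{n_{i+1}, ∂^{k−i}(n_i)}. -/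
lemma lt_choose_add_succ {k : ℕ} (hk : k ≠ 0) (n : ℕ) : n < (n + k + 1).choose k := by
  have h : (n + 2).choose (n + 1) ≤ (k + (n + 1)).choose (n + 1) :=
    Nat.choose_le_choose _ (by omega)
  rw [← Nat.choose_symm_add, Nat.choose_succ_self_right] at h
  rw [show n + k + 1 = k + (n + 1) by omega]
  omega

lemma choose_cascadeTop_le {k : ℕ} (hk : k ≠ 0) (n : ℕ) : (cascadeTop k n).choose k ≤ n :=
  Nat.findGreatest_spec (P := fun m => m.choose k ≤ n) (Nat.zero_le _)
    (by simp [Nat.choose_eq_zero_of_lt (Nat.pos_of_ne_zero hk)])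

lemma lt_choose_cascadeTop_succ {k : ℕ} (hk : k ≠ 0) (n : ℕ) :
    n < (cascadeTop k n + 1).choose k := by
  by_contra! h
  have hle : cascadeTop k n + 1 ≤ n + k + 1 := by
    by_contra! hgt
    have := Nat.choose_le_choose k (show n + k + 1 ≤ cascadeTop k n by omega)
    have := choose_cascadeTop_le hk n
    have := lt_choose_add_succ hk n
    omega
  exact Nat.findGreatest_is_greatest (Nat.lt_succ_self _) hle h

lemma cascadeTop_eq_s2 {k q n : ℕ} (hk : k ≠ 0) (h₁ : q.choose k ≤ n)
    (h₂ : n < (q + 1).choose k) : cascadeTop k n = q := by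
  have := choose_cascadeTop_le hk n
  have := lt_choose_cascadeTop_succ hk n
  apply le_antisymm
  · by_contra! h
    have := Nat.choose_le_choose k (show q + 1 ≤ cascadeTop k n by omega)
    omega
  · by_contra! h
    have := Nat.choose_le_choose k (show cascadeTop k n + 1 ≤ q by omega)
    omega

lemma exists_eq_choose_add (k : ℕ) {n : ℕ} (hn : n ≠ 0) :
    ∃ q r, k ≤ q ∧ n = (q + 1).choose (k + 1) + r ∧ r < (q + 1).choose k := by
  have h₁ := choose_cascadeTop_le (Nat.add_one_ne_zero k) n
  have h₂ := lt_choose_cascadeTop_succ (Nat.add_one_ne_zero k) n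
  have h₃ : k + 1 ≤ cascadeTop (k + 1) n :=
    Nat.le_findGreatest (by omega) (by simpa using Nat.one_le_iff_ne_zero.2 hn)
  obtain ⟨q, hq⟩ : ∃ q, cascadeTop (k + 1) n = q + 1 :=
    ⟨_, (Nat.succ_pred_eq_of_pos (by omega)).symm⟩
  rw [hq, Nat.choose_succ_succ' (q + 1)] at h₂
  rw [hq] at h₁ h₃
  exact ⟨q, n - (q + 1).choose (k + 1), by omega, by omega, by omega⟩

@[simp]
lemma delSym_zero_right (k : ℕ) : delSym k 0 = 0 := by
  cases k <;> rfl

lemma delSym_zero_left (n : ℕ) : delSym 0 n = min n 1 := by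
  cases n with
  | zero => rfl
  | succ n => show 1 = _; omega

lemma delSym_choose_add {k q r : ℕ} (hr : r < (q + 1).choose k) :
    delSym (k + 1) ((q + 1).choose (k + 1) + r) = q.choose k + delSym k r := by
  rcases Nat.eq_zero_or_pos ((q + 1).choose (k + 1) + r) with h0 | hpos
  · obtain ⟨hc, rfl⟩ : (q + 1).choose (k + 1) = 0 ∧ r = 0 := by omega
    rw [hc, Nat.choose_eq_zero_of_lt (show q < k by rw [Nat.choose_eq_zero_iff] at hc; omega)]
    simp
  · obtain ⟨n, hn⟩ := Nat.exists_eq_succ_of_ne_zero hpos.ne'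
    have hct : cascadeTop (k + 1) (n + 1) = q + 1 :=
      cascadeTop_eq_s2 (Nat.add_one_ne_zero k) (by omega)
        (by rw [Nat.choose_succ_succ' (q + 1)]; omega)
    rw [hn, delSym, hct, Nat.add_sub_cancel, show n + 1 - (q + 1).choose (k + 1) = r by omega]

lemma delSym_choose (k q : ℕ) : delSym (k + 1) ((q + 1).choose (k + 1)) = q.choose k := by
  rcases le_or_gt k (q + 1) with hk | hk
  · simpa using delSym_choose_add (r := 0) (Nat.choose_pos hk)
  · rw [Nat.choose_eq_zero_of_lt (by omega), Nat.choose_eq_zero_of_lt (by omega),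
      delSym_zero_right]

lemma delSym_one_left (n : ℕ) : delSym 1 n = min n 1 := by
  rcases n with _ | n
  · rfl
  · simpa using delSym_choose 0 n

lemma delSym_one_right (k : ℕ) : delSym k 1 = 1 := by
  rcases k with _ | k
  · rfl
  · simpa using delSym_choose k k

lemma delSym_of_le {k n : ℕ} (h : n ≤ k) : delSym k n = n := by
  induction k generalizing n with
  | zero => simp [show n = 0 by omega]
  | succ k ih =>
    rcases n with _ | n
    · simp
    · have := delSym_choose_add (q := k) (r := n) (by rw [Nat.choose_succ_self_right]; omega)
      rw [Nat.choose_self, Nat.choose_self, ih (by omega)] at this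
      rwa [add_comm 1 n] at this

lemma delSym_le_self (k n : ℕ) : delSym k n ≤ n := by
  induction k generalizing n with
  | zero => rw [delSym_zero_left]; omega
  | succ k ih =>
    rcases eq_or_ne n 0 with rfl | hn
    · simp
    obtain ⟨q, r, -, rfl, hr⟩ := exists_eq_choose_add k hn
    rw [delSym_choose_add hr, Nat.choose_succ_succ' q]
    have := ih r
    omega

lemma delSym_choose_add_of_le {k q r : ℕ} (hr : r ≤ (q + 1).choose (k + 1)) :
    delSym (k + 2) ((q + 1).choose (k + 2) + r) = q.choose (k + 1) + delSym (k + 1) r := by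
  rcases hr.lt_or_eq with hr | rfl
  · exact delSym_choose_add hr
  · rw [add_comm ((q + 1).choose (k + 2)), ← Nat.choose_succ_succ', delSym_choose,
      delSym_choose, Nat.choose_succ_succ' q, add_comm]

theorem delSym_mono (k : ℕ) : Monotone (delSym k) := by
  induction k with
  | zero => intro m n h; simp only [delSym_zero_left]; omega
  | succ k ih =>
    intro m n hmn
    rcases eq_or_ne m 0 with rfl | hm
    · simp
    obtain ⟨p, s, -, rfl, hs⟩ := exists_eq_choose_add k hm
    obtain ⟨q, r, -, rfl, hr⟩ := exists_eq_choose_add k (by omega : n ≠ 0)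
    rw [delSym_choose_add hs, delSym_choose_add hr]
    rcases lt_trichotomy p q with hpq | rfl | hpq
    · have hs' : p.choose k + delSym k s ≤ (p + 1).choose k := by
        rcases k with _ | k
        · simp [show s = 0 by simpa using hs]
        · have := ih hs.le
          rw [delSym_choose, Nat.choose_succ_succ' p] at *
          omega
      have := Nat.choose_le_choose k (show p + 1 ≤ q by omega)
      omega
    · have := ih (show s ≤ r by omega)
      omega
    · have := Nat.choose_le_choose (k + 1) (show q + 2 ≤ p + 1 by omega)
      rw [Nat.choose_succ_succ' (q + 1)] at this
      omega

/-- Complementation in `{0, …, j + d + 1}` reverses the colex order and exchanges `(j+1)`-sets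
with `(d+1)`-sets, which turns `∂^{j+1}` into `∂^{d+1}` read from the other end. -/
theorem delSym_add_choose_eq (j d : ℕ) {x : ℕ} (hx : x ≤ (j + d + 2).choose (j + 1)) :
    delSym (j + 1) x + (j + d + 1).choose (j + 1) =
      x + delSym (d + 1) ((j + d + 2).choose (j + 1) - x) := by
  have top : ∀ j' d' x, j' + d' = j + d → (j' + d' + 1).choose (j' + 1) ≤ x →
      x ≤ (j' + d' + 2).choose (j' + 1) → delSym (j' + 1) x + (j' + d' + 1).choose (j' + 1) =
        x + delSym (d' + 1) ((j' + d' + 2).choose (j' + 1) - x) := by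
    intro j' d' x hs h₁ h₂
    rcases j' with _ | i
    · simp only [zero_add, Nat.choose_one_right, delSym_one_left] at h₁ h₂ ⊢
      rcases h₂.lt_or_eq with h₂ | rfl
      · rw [show d' + 2 - x = 1 by omega, delSym_one_right]
        omega
      · rw [Nat.sub_self, delSym_zero_right]
        omega
    · rw [show i + 1 + d' + 1 = i + d' + 2 by omega, show i + 1 + d' + 2 = i + d' + 3 by omega,
        show i + 1 + 1 = i + 2 by omega] at *
      obtain ⟨r, rfl⟩ := Nat.exists_eq_add_of_le h₁
      have hsplit : (i + d' + 3).choose (i + 2) =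
          (i + d' + 2).choose (i + 1) + (i + d' + 2).choose (i + 2) :=
        Nat.choose_succ_succ' _ _
      have hr : r ≤ (i + d' + 2).choose (i + 1) := by omega
      rw [delSym_choose_add_of_le hr, show (i + d' + 3).choose (i + 2) -
        ((i + d' + 2).choose (i + 2) + r) = (i + d' + 2).choose (i + 1) - r by omega]
      have := delSym_add_choose_eq i d' hr
      omega
  rcases le_or_gt ((j + d + 1).choose (j + 1)) x with h | h
  · exact top j d x rfl h hx
  · have e₁ : (d + j + 2).choose (d + 1) = (j + d + 2).choose (j + 1) :=
      (Nat.choose_symm_of_eq_add (b := j + 1) (by omega)).trans (by rw [add_comm d j])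
    have e₂ : (d + j + 1).choose (d + 1) = (j + d + 1).choose j :=
      (Nat.choose_symm_of_eq_add (b := j) (by omega)).trans (by rw [add_comm d j])
    have hsplit : (j + d + 2).choose (j + 1) = (j + d + 1).choose j + (j + d + 1).choose (j + 1) :=
      Nat.choose_succ_succ' _ _
    have := top d j ((j + d + 2).choose (j + 1) - x) (by omega) (by omega) (by omega)
    rw [e₁, e₂, show (j + d + 2).choose (j + 1) - ((j + d + 2).choose (j + 1) - x) = x by omega]
      at this
    omega
termination_by j + d

lemma le_delSym_add_delSym_of_le_one {j d y : ℕ} (hj : j ≤ 1) (hy : y ≤ d + 1) :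
    y ≤ delSym j y + delSym d y := by
  rcases eq_or_ne y 0 with rfl | hy₀
  · simp
  have hj' : delSym j y = 1 := by
    interval_cases j <;> simp [delSym_zero_left, delSym_one_left, Nat.one_le_iff_ne_zero.2 hy₀]
  have := delSym_mono d (min_le_left y d)
  rw [delSym_of_le (min_le_right y d)] at this
  omega

/-- Peeling the leading cascade term off `y` at levels `a + 2` and `b + 2`, the two
complementation identities meet at `C(a+b+4, a+2) - y`. -/
lemma le_delSym_add_delSym_of_lt {a b y : ℕ}
    (hD : ∀ z ≤ y, ∀ k, delSym k z ≤ delSym (k + 1) z)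
    (ih : ∀ z ≤ (a + b + 3).choose (a + 1), z ≤ y →
      z ≤ delSym (a + 1) z + delSym (b + 2) z)
    (h₁ : (a + b + 3).choose (a + 2) < y) (h₂ : (a + b + 3).choose (a + 1) < y)
    (hy : y ≤ (a + b + 4).choose (a + 2)) : y ≤ delSym (a + 2) y + delSym (b + 2) y := by
  have hsplit : (a + b + 4).choose (a + 2) =
      (a + b + 3).choose (a + 1) + (a + b + 3).choose (a + 2) := Nat.choose_succ_succ' _ _
  have hsplit' : (a + b + 3).choose (a + 1) =
      (a + b + 2).choose a + (a + b + 2).choose (a + 1) := Nat.choose_succ_succ' _ _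
  have e₁ : (a + b + 3).choose (b + 2) = (a + b + 3).choose (a + 1) :=
    Nat.choose_symm_of_eq_add (by omega)
  have e₂ : (a + b + 3).choose (b + 1) = (a + b + 3).choose (a + 2) :=
    Nat.choose_symm_of_eq_add (by omega)
  have e₃ : (a + b + 2).choose (b + 1) = (a + b + 2).choose (a + 1) :=
    Nat.choose_symm_of_eq_add (by omega)
  have e₄ : (a + b + 2).choose (b + 2) = (a + b + 2).choose a :=
    Nat.choose_symm_of_eq_add (by omega)
  obtain ⟨y₁, hy₁⟩ : ∃ y₁, y = (a + b + 3).choose (a + 2) + y₁ :=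
    ⟨y - (a + b + 3).choose (a + 2), by omega⟩
  obtain ⟨y₂, hy₂⟩ : ∃ y₂, y = (a + b + 3).choose (b + 2) + y₂ :=
    ⟨y - (a + b + 3).choose (b + 2), by omega⟩
  have hj : delSym (a + 2) y = (a + b + 2).choose (a + 1) + delSym (a + 1) y₁ := by
    rw [hy₁]; exact delSym_choose_add_of_le (show y₁ ≤ (a + b + 3).choose (a + 1) by omega)
  have hd : delSym (b + 2) y = (a + b + 2).choose (b + 1) + delSym (b + 1) y₂ := by
    rw [hy₂]; exact delSym_choose_add_of_le (show y₂ ≤ (a + b + 3).choose (b + 1) by omega)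
  have ih₁ := ih y₁ (by omega) (by omega)
  have compl₁ := delSym_add_choose_eq (b + 1) a (x := y₁)
    (by rw [show b + 1 + a + 2 = a + b + 3 by omega, show b + 1 + 1 = b + 2 from rfl]; omega)
  have compl₂ := delSym_add_choose_eq b (a + 1) (x := y₂)
    (by rw [show b + (a + 1) + 2 = a + b + 3 by omega]; omega)
  rw [show b + 1 + a + 1 = a + b + 2 by omega, show b + 1 + a + 2 = a + b + 3 by omega,
    show b + 1 + 1 = b + 2 from rfl, e₁, e₄,
    show (a + b + 3).choose (a + 1) - y₁ = (a + b + 3).choose (a + 2) - y₂ by omega] at compl₁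
  rw [show b + (a + 1) + 1 = a + b + 2 by omega, show b + (a + 1) + 2 = a + b + 3 by omega,
    show a + 1 + 1 = a + 2 from rfl, e₂, e₃] at compl₂
  have : delSym (a + 1) ((a + b + 3).choose (a + 2) - y₂) ≤
      delSym (a + 2) ((a + b + 3).choose (a + 2) - y₂) := hD _ (by omega) _
  omega

theorem le_delSym_add_delSym {y : ℕ} (hD : ∀ z ≤ y, ∀ k, delSym k z ≤ delSym (k + 1) z)
    (j d : ℕ) (hy : y ≤ (j + d).choose j) : y ≤ delSym j y + delSym d y := by
  rcases le_or_gt j 1 with hj | hj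
  · refine le_delSym_add_delSym_of_le_one hj (hy.trans ?_)
    interval_cases j <;> simp [add_comm]
  rcases le_or_gt d 1 with hd | hd
  · rw [Nat.choose_symm_add] at hy
    rw [add_comm]
    refine le_delSym_add_delSym_of_le_one hd (hy.trans ?_)
    interval_cases d <;> simp
  obtain ⟨a, rfl⟩ : ∃ a, j = a + 2 := ⟨j - 2, by omega⟩
  obtain ⟨b, rfl⟩ : ∃ b, d = b + 2 := ⟨d - 2, by omega⟩
  rw [show a + 2 + (b + 2) = a + b + 4 by omega] at hy
  by_cases h₁ : y ≤ (a + b + 3).choose (a + 2)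
  · have := le_delSym_add_delSym hD (a + 2) (b + 1)
      (by rwa [show a + 2 + (b + 1) = a + b + 3 by omega])
    have : delSym (b + 1) y ≤ delSym (b + 2) y := hD y le_rfl _
    omega
  by_cases h₂ : y ≤ (a + b + 3).choose (a + 1)
  · have := le_delSym_add_delSym hD (a + 1) (b + 2)
      (by rwa [show a + 1 + (b + 2) = a + b + 3 by omega])
    have : delSym (a + 1) y ≤ delSym (a + 2) y := hD y le_rfl _
    omega
  refine le_delSym_add_delSym_of_lt hD (fun z hz hzy => ?_) (by omega) (by omega) hy
  exact le_delSym_add_delSym (fun w hw => hD w (hw.trans hzy)) (a + 1) (b + 2)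
    (by rwa [show a + 1 + (b + 2) = a + b + 3 by omega])
termination_by j + d

/-- Complementation in `{0, …, q}` turns this into subadditivity of `∂^{q-k}` on `C - x` and
`C - y`, where `C = C(q+1, k+1)`; their sum `C - r` is below `x + y` unless `r = 0`, and then
`y = C - x` and `le_delSym_add_delSym` takes over. -/
lemma choose_add_delSym_le {k q x y r : ℕ}
    (hS : ∀ j a b, a + b < x + y → delSym j (a + b) ≤ delSym j a + delSym j b)
    (hD : ∀ z < x + y, ∀ k, delSym k z ≤ delSym (k + 1) z)
    (hx : x < (q + 1).choose (k + 1)) (hy : y < (q + 1).choose (k + 1))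
    (hxy : x + y = (q + 1).choose (k + 1) + r) :
    q.choose k + delSym (k + 1) r ≤ delSym (k + 1) x + delSym (k + 1) y := by
  obtain ⟨d, rfl⟩ : ∃ d, q = k + d + 1 := by
    refine ⟨q - k - 1, ?_⟩
    by_contra hq
    have := Nat.choose_le_choose (k + 1) (show q + 1 ≤ k + 1 by omega)
    rw [Nat.choose_self] at this
    omega
  rw [show k + d + 1 + 1 = k + d + 2 by omega] at *
  have hsplit : (k + d + 2).choose (k + 1) = (k + d + 1).choose k + (k + d + 1).choose (k + 1) :=
    Nat.choose_succ_succ' _ _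
  have compl_x := delSym_add_choose_eq k d hx.le
  have compl_y := delSym_add_choose_eq k d hy.le
  have compl_r := delSym_add_choose_eq k d (x := r) (by omega)
  rcases eq_or_ne r 0 with rfl | hr
  · have := le_delSym_add_delSym (y := y) (fun z hz => hD z (by omega)) (k + 1) (d + 1)
      (by rw [show k + 1 + (d + 1) = k + d + 2 by omega]; omega)
    rw [show (k + d + 2).choose (k + 1) - x = y by omega] at compl_x
    rw [delSym_zero_right]
    omega
  · have := hS (d + 1) ((k + d + 2).choose (k + 1) - x) ((k + d + 2).choose (k + 1) - y) (by omega)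
    rw [show (k + d + 2).choose (k + 1) - x + ((k + d + 2).choose (k + 1) - y) =
      (k + d + 2).choose (k + 1) - r by omega] at this
    omega

lemma delSym_add_le_of_forall_lt {x y : ℕ}
    (hS : ∀ j a b, a + b < x + y → delSym j (a + b) ≤ delSym j a + delSym j b)
    (hD : ∀ z < x + y, ∀ k, delSym k z ≤ delSym (k + 1) z) (j : ℕ) :
    delSym j (x + y) ≤ delSym j x + delSym j y := by
  rcases j with _ | k
  · simp only [delSym_zero_left]; omega
  rcases eq_or_ne (x + y) 0 with hxy | hxy
  · simp [hxy]
  obtain ⟨q, r, hkq, hxy', hr⟩ := exists_eq_choose_add k hxy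
  have hC := Nat.choose_pos (show k + 1 ≤ q + 1 by omega)
  rw [hxy', delSym_choose_add hr]
  have leading : ∀ a b, a + b = x + y → (q + 1).choose (k + 1) ≤ a →
      q.choose k + delSym k r ≤ delSym (k + 1) a + delSym (k + 1) b := by
    intro a b hab ha
    obtain ⟨s, rfl⟩ := Nat.exists_eq_add_of_le ha
    rw [delSym_choose_add (show s < (q + 1).choose k by omega),
      show r = s + b by omega]
    have := hS k s b (by omega)
    have := hD b (by omega) k
    omega
  rcases le_or_gt ((q + 1).choose (k + 1)) x with hx | hx
  · exact leading x y rfl hx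
  rcases le_or_gt ((q + 1).choose (k + 1)) y with hy | hy
  · rw [add_comm (delSym _ x)]
    exact leading y x (add_comm y x) hy
  have := choose_add_delSym_le hS hD hx hy hxy'
  have := hD r (by omega) k
  omega

lemma delSym_choose_le_of_subadd {k q : ℕ}
    (hS : ∀ a b, a + b ≤ (q + 1).choose (k + 2) →
      delSym (k + 1) (a + b) ≤ delSym (k + 1) a + delSym (k + 1) b) :
    delSym (k + 1) ((q + 1).choose (k + 2)) ≤ q.choose (k + 1) := by
  induction q with
  | zero => simp [Nat.choose_eq_zero_of_lt]
  | succ q ih =>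
    have hsplit : (q + 2).choose (k + 2) = (q + 1).choose (k + 1) + (q + 1).choose (k + 2) :=
      Nat.choose_succ_succ' _ _
    have ih := ih fun a b h => hS a b (h.trans (Nat.choose_le_choose _ (by omega)))
    have := hS _ _ hsplit.ge
    rw [← hsplit, delSym_choose] at this
    have := Nat.choose_succ_succ' q k
    show delSym (k + 1) ((q + 2).choose (k + 2)) ≤ (q + 1).choose (k + 1)
    omega

lemma delSym_le_delSym_succ_of_subadd {n : ℕ}
    (hS : ∀ j a b, a + b ≤ n → delSym j (a + b) ≤ delSym j a + delSym j b) (k : ℕ) :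
    delSym k n ≤ delSym (k + 1) n := by
  rcases k with _ | j
  · rw [delSym_zero_left, delSym_one_left]
  rcases eq_or_ne n 0 with rfl | hn
  · simp
  obtain ⟨q, r, -, rfl, hr⟩ := exists_eq_choose_add (j + 1) hn
  rw [show j + 1 + 1 = j + 2 from rfl] at *
  rw [delSym_choose_add hr]
  have := hS (j + 1) _ _ le_rfl
  have := delSym_choose_le_of_subadd (k := j) (q := q) fun a b h => hS (j + 1) a b (by omega)
  omega

theorem delSym_add_le_and_le_delSym_succ (N : ℕ) :
    (∀ j x y, x + y ≤ N → delSym j (x + y) ≤ delSym j x + delSym j y) ∧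
      ∀ n ≤ N, ∀ k, delSym k n ≤ delSym (k + 1) n := by
  induction N using Nat.strong_induction_on with
  | _ N ih =>
  have hS : ∀ j x y, x + y ≤ N → delSym j (x + y) ≤ delSym j x + delSym j y :=
    fun j x y _ => delSym_add_le_of_forall_lt
      (fun j a b h => (ih (a + b) (by omega)).1 j a b le_rfl)
      (fun z hz k => (ih z (by omega)).2 z le_rfl k) j
  exact ⟨hS, fun n hn => delSym_le_delSym_succ_of_subadd fun j a b h => hS j a b (h.trans hn)⟩

theorem delSym_add_le (j x y : ℕ) : delSym j (x + y) ≤ delSym j x + delSym j y :=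
  (delSym_add_le_and_le_delSym_succ (x + y)).1 j x y le_rfl

theorem delSym_le_delSym_succ (k n : ℕ) : delSym k n ≤ delSym (k + 1) n :=
  (delSym_add_le_and_le_delSym_succ n).2 n le_rfl k

lemma delSym_add_le_max_of_choose_lt {k s a b : ℕ}
    (ih : ∀ a b, delSym (k + 1) (a + b) ≤ max b (delSym (k + 1) a + delSym k b))
    (ha₁ : (s + 1).choose (k + 2) < a) (ha₂ : a < (s + 2).choose (k + 2))
    (hab₁ : (s + 2).choose (k + 2) ≤ a + b) (hab₂ : a + b < (s + 3).choose (k + 2)) :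
    delSym (k + 2) (a + b) ≤ max b (delSym (k + 2) a + delSym (k + 1) b) := by
  have hsplit₁ : (s + 1).choose (k + 1) = s.choose k + s.choose (k + 1) :=
    Nat.choose_succ_succ' _ _
  have hsplit₂ : (s + 2).choose (k + 1) = (s + 1).choose k + (s + 1).choose (k + 1) :=
    Nat.choose_succ_succ' _ _
  have hsplit₂' : (s + 2).choose (k + 2) = (s + 1).choose (k + 1) + (s + 1).choose (k + 2) :=
    Nat.choose_succ_succ' _ _
  have hsplit₃ : (s + 3).choose (k + 2) = (s + 2).choose (k + 1) + (s + 2).choose (k + 2) :=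
    Nat.choose_succ_succ' _ _
  obtain ⟨r, hN⟩ := Nat.exists_eq_add_of_le hab₁
  obtain ⟨a', rfl⟩ := Nat.exists_eq_add_of_le ha₁.le
  have hr : r < (s + 2).choose (k + 1) := by omega
  rw [hN, delSym_choose_add hr, delSym_choose_add (show a' < (s + 1).choose (k + 1) by omega)]
  rcases le_or_gt ((s + 2).choose (k + 1)) b with hb | hb
  · have : delSym (k + 1) r ≤ (s + 1).choose k :=
      (delSym_mono (k + 1) hr.le).trans_eq (delSym_choose k (s + 1))
    omega
  rcases le_or_gt ((s + 1).choose (k + 1)) b with hb' | hb'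
  · obtain ⟨b', rfl⟩ := Nat.exists_eq_add_of_le hb'
    rw [delSym_choose_add (show b' < (s + 1).choose k by omega), show r = a' + b' by omega]
    have := ih a' b'
    omega
  · have := choose_add_delSym_le (fun j a b _ => delSym_add_le j a b)
      (fun z _ k => delSym_le_delSym_succ k z) (show a' < (s + 1).choose (k + 1) by omega) hb'
      (show a' + b = (s + 1).choose (k + 1) + r by omega)
    omega

lemma delSym_add_le_max_succ_succ {k : ℕ}
    (ih : ∀ a b, delSym (k + 1) (a + b) ≤ max b (delSym (k + 1) a + delSym k b)) (a b : ℕ) :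
    delSym (k + 2) (a + b) ≤ max b (delSym (k + 2) a + delSym (k + 1) b) := by
  rcases eq_or_ne (a + b) 0 with hab | hab
  · simp [hab]
  obtain ⟨q, r, hkq, hN, hr⟩ := exists_eq_choose_add (k + 1) hab
  rw [show k + 1 + 1 = k + 2 from rfl] at hN
  have hsplit : (q + 1).choose (k + 2) = q.choose (k + 1) + q.choose (k + 2) :=
    Nat.choose_succ_succ' _ _
  rcases le_or_gt ((q + 1).choose (k + 2)) a with ha | ha
  · obtain ⟨s, rfl⟩ := Nat.exists_eq_add_of_le ha
    rw [hN, delSym_choose_add hr, delSym_choose_add (show s < (q + 1).choose (k + 1) by omega),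
      show r = s + b by omega]
    have := delSym_add_le (k + 1) s b
    omega
  rcases le_or_gt a (q.choose (k + 2)) with ha' | ha'
  · rw [hN, delSym_choose_add hr]
    have := delSym_le_self (k + 1) r
    omega
  obtain ⟨s, rfl⟩ : ∃ s, q = s + 1 := ⟨q - 1, by omega⟩
  have hN : a + b = (s + 2).choose (k + 2) + r := hN
  have hr : r < (s + 2).choose (k + 1) := hr
  have : (s + 3).choose (k + 2) = (s + 2).choose (k + 1) + (s + 2).choose (k + 2) :=
    Nat.choose_succ_succ' _ _
  exact delSym_add_le_max_of_choose_lt ih ha' ha (by omega) (by omega)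

theorem delSym_add_le_max : ∀ k a b : ℕ,
    delSym k (a + b) ≤ max b (delSym k a + delSym (k - 1) b)
  | 0, a, b => le_max_of_le_right (delSym_add_le 0 a b)
  | 1, a, b => le_max_of_le_right <| by
    simpa only [delSym_zero_left, delSym_one_left, Nat.sub_self] using delSym_add_le 0 a b
  | k + 2, a, b => delSym_add_le_max_succ_succ (delSym_add_le_max (k + 1)) a b

theorem delSym_subadditive_general (k r : ℕ) (n : ℕ → ℕ) :
    delSym k (∑ i ∈ Finset.range (r + 1), n i) ≤
      ∑ i ∈ Finset.range (r + 1), max (n (i + 1)) (delSym (k - i) (n i)) := by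
  induction r generalizing k n with
  | zero => simp
  | succ r ih =>
    rw [Finset.sum_range_succ' n, add_comm]
    refine (delSym_add_le_max k _ _).trans (max_le ?_ ?_)
    · calc ∑ i ∈ Finset.range (r + 1), n (i + 1)
          ≤ ∑ i ∈ Finset.range (r + 1 + 1), n (i + 1) :=
            Finset.sum_le_sum_of_subset (Finset.range_subset_range.2 (by omega))
        _ ≤ _ := Finset.sum_le_sum fun i _ => le_max_left _ _
    · have tail := ih (k - 1) (fun i => n (i + 1))
      simp only [Nat.sub_sub, add_comm 1] at tail
      rw [Finset.sum_range_succ' _ (r + 1), Nat.sub_zero]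
      have := le_max_right (n (0 + 1)) (delSym k (n 0))
      omega

/-- Lemma 3.2 of Björner–Vrećica: for k > 0 and r < k,
∂^k(n_0 + ... + n_r) ≤ Σ_{i=0}^{r} max {n_{i+1}, ∂^{k-i}(n_i)}. -/
theorem delSym_subadditive (k r : ℕ) (hk : 0 < k) (hr : r < k) (n : ℕ → ℕ) :
    delSym k (∑ i ∈ Finset.range (r + 1), n i) ≤
      ∑ i ∈ Finset.range (r + 1), max (n (i + 1)) (delSym (k - i) (n i)) :=
  delSym_subadditive_general k r n
end

section
/- A finite ranked meet semi-lattice P has the diamond property if and only if for every x̂ ∈ P, every x covering x̂, and every y > x̂, there exists y' ∈ P with x̂ ≤ y', y' covered by y, and x not ≤ y'. -/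
/-- The rank function is compatible with the covering relation. -/
def CoverRank {P : Type*} [PartialOrder P] (rk : P → ℕ) : Prop :=
  ∀ a b : P, a ⋖ b → rk b = rk a + 1

/-- The rank function is strictly monotone (the poset is graded). -/
def RankStrictMono {P : Type*} [PartialOrder P] (rk : P → ℕ) : Prop :=
  ∀ a b : P, a < b → rk a < rk b

/-- The diamond property: every interval of rank 2 contains at least two
intermediate elements. -/
def DiamondProp {P : Type*} [PartialOrder P] (rk : P → ℕ) : Prop :=
  ∀ x y : P, x < y → rk y = rk x + 2 →
    ∃ a b : P, a ≠ b ∧ a ∈ Set.Ioo x y ∧ b ∈ Set.Ioo x y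

/-- The parallelogram property (Definition of the paper): for every `x̂` and every
`y > x̂`, if the chain `x̂ = x 0 ⋖ x 1 ⋖ ... ⋖ x r` (`r > 0`) equals the closed
interval `[x̂, x r]`, is maximal w.r.t. inclusion among chain-intervals above `x̂`,
and `r` is less than the rank of `y` in `P(x̂)`, then whenever `x i < y` and
`x (i+1) ≰ y` for some `0 < i ≤ r` (interpreting, for `i = r`, the latter as
`[x̂, y]` is not a chain), there exists `y'` with `x̂ ≤ y'`, `y' ⋖ y`,
`x (i-1) < y'` and `¬ x i ≤ y'`. -/
def ParallelogramProp {P : Type*} [PartialOrder P] (rk : P → ℕ) : Prop :=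
  ∀ (xh y : P) (r : ℕ) (x : ℕ → P),
    xh < y → 0 < r → x 0 = xh →
    (∀ j, j < r → x j ⋖ x (j + 1)) →
    Set.Icc xh (x r) = {p | ∃ j ≤ r, p = x j} →
    (∀ z : P, x r < z → ¬ IsChain (· ≤ ·) (Set.Icc xh z)) →
    r < rk y - rk xh →
    ∀ i, 0 < i → i ≤ r → x i < y →
      ((i < r ∧ ¬ x (i + 1) ≤ y) ∨ (i = r ∧ ¬ IsChain (· ≤ ·) (Set.Icc xh y))) →
      ∃ y' : P, xh ≤ y' ∧ y' ⋖ y ∧ x (i - 1) < y' ∧ ¬ x i ≤ y'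

/-!
The diamond property implies the covering condition by well-founded induction on `y`. The only
interesting case is `x < y`: pick `x ≤ z ⋖ y`, and by induction `x̂ ≤ z' ⋖ z` with `x ≰ z'`.
The rank-2 interval `[z', y]` then contains a second coatom `w ≠ z` of `y`, and `w ⊓ z = z'`,
so `x ≤ w` would force `x ≤ z'`.

Conversely, for `x ⋖ z ≤ y` with `rk y = rk x + 2`, the covering condition for `x ⋖ z` and `y`
yields a coatom of `y` above `x` that is distinct from `z`.
-/

section Ranked

variable {P : Type*} [PartialOrder P] {rk : P → ℕ}

lemma RankStrictMono.covBy_of_rank_eq_succ (hm : RankStrictMono rk) {a b : P} (hab : a < b)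
    (hr : rk b = rk a + 1) : a ⋖ b :=
  ⟨hab, fun c hac hcb => by have := hm _ _ hac; have := hm _ _ hcb; omega⟩

lemma CoverRank.rank_eq_add_two (hc : CoverRank rk) {a b c : P} (hab : a ⋖ b) (hbc : b ⋖ c) :
    rk c = rk a + 2 := by
  rw [hc _ _ hbc, hc _ _ hab]

lemma DiamondProp.exists_ne_covBy (hd : DiamondProp rk) (hc : CoverRank rk)
    (hm : RankStrictMono rk) {z' z y : P} (hz' : z' ⋖ z) (hz : z ⋖ y) :
    ∃ w, w ≠ z ∧ z' < w ∧ w ⋖ y := by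
  have hr := hc.rank_eq_add_two hz' hz
  obtain ⟨a, b, hab, ha, hb⟩ := hd z' y (hz'.lt.trans hz.lt) hr
  have hcov : ∀ w ∈ Set.Ioo z' y, w ⋖ y := fun w ⟨hz'w, hwy⟩ =>
    hm.covBy_of_rank_eq_succ hwy (by have := hm _ _ hz'w; have := hm _ _ hwy; omega)
  by_cases haz : a = z
  · exact ⟨b, fun hbz => hab (haz.trans hbz.symm), hb.1, hcov b hb⟩
  · exact ⟨a, haz, ha.1, hcov a ha⟩

end Ranked

lemma inf_eq_of_covBy_of_lt {P : Type*} [SemilatticeInf P] {z' z w y : P} (hz' : z' ⋖ z)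
    (hz : z ⋖ y) (hz'w : z' ≤ w) (hwy : w < y) (hwz : w ≠ z) : w ⊓ z = z' := by
  refine (hz'.eq_or_eq (le_inf hz'w hz'.le) inf_le_right).resolve_right fun h => ?_
  have hzw : z ≤ w := h ▸ inf_le_left
  exact hz.2 (hzw.lt_of_ne hwz.symm) hwy

theorem DiamondProp.exists_covBy_not_le {P : Type*} [SemilatticeInf P] [Finite P] {rk : P → ℕ}
    (hd : DiamondProp rk) (hc : CoverRank rk) (hm : RankStrictMono rk) {xh x : P}
    (hx : xh ⋖ x) (y : P) (hy : xh < y) : ∃ y', xh ≤ y' ∧ y' ⋖ y ∧ ¬ x ≤ y' := by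
  induction y using WellFoundedLT.induction with | ind y ih
  by_cases hxy : x ≤ y
  · rcases hxy.eq_or_lt with rfl | hxy
    · exact ⟨xh, le_rfl, hx, hx.lt.not_ge⟩
    obtain ⟨z, hxz, hzy⟩ := exists_le_covBy_of_lt hxy
    obtain ⟨z', hxhz', hz'z, hxz'⟩ := ih z hzy.lt (hx.lt.trans_le hxz)
    obtain ⟨w, hwz, hz'w, hwy⟩ := hd.exists_ne_covBy hc hm hz'z hzy
    have hmeet : w ⊓ z = z' := inf_eq_of_covBy_of_lt hz'z hzy hz'w.le hwy.lt hwz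
    exact ⟨w, hxhz'.trans hz'w.le, hwy, fun hxw => hxz' (hmeet ▸ le_inf hxw hxz)⟩
  · obtain ⟨y', hxhy', hy'y⟩ := exists_le_covBy_of_lt hy
    exact ⟨y', hxhy', hy'y, fun hxy' => hxy (hxy'.trans hy'y.le)⟩

theorem diamondProp_of_exists_covBy_not_le {P : Type*} [PartialOrder P] [Finite P] {rk : P → ℕ}
    (hc : CoverRank rk)
    (hstar : ∀ xh x y : P, xh ⋖ x → xh < y → ∃ y' : P, xh ≤ y' ∧ y' ⋖ y ∧ ¬ x ≤ y') :
    DiamondProp rk := by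
  intro x y hxy hr
  obtain ⟨z, hxz, hzy⟩ := exists_covBy_le_of_lt hxy
  obtain ⟨y', hxy', hy'y, hzy'⟩ := hstar x z y hxz hxy
  have hry' := hc _ _ hy'y
  have hzy : z < y := hzy.lt_of_ne fun h => by subst h; have := hc _ _ hxz; omega
  have hxy' : x < y' := hxy'.lt_of_ne fun h => by subst h; omega
  exact ⟨z, y', fun h => hzy' h.le, ⟨hxz.lt, hzy⟩, ⟨hxy', hy'y.lt⟩⟩

theorem diamond_iff_star_general {P : Type*} [SemilatticeInf P] [Fintype P]
    (rk : P → ℕ) (hc : CoverRank rk) (hm : RankStrictMono rk) :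
    DiamondProp rk ↔
      ∀ xh x y : P, xh ⋖ x → xh < y →
        ∃ y' : P, xh ≤ y' ∧ y' ⋖ y ∧ ¬ x ≤ y' :=
  ⟨fun hd _ _ y hx hy => hd.exists_covBy_not_le hc hm hx y hy,
    diamondProp_of_exists_covBy_not_le hc⟩

/-- For a finite ranked meet semi-lattice, the diamond property is equivalent to
condition (*): for every `x̂`, every `x` covering `x̂` and every `y > x̂`, there is
`y'` with `x̂ ≤ y'`, `y' ⋖ y` and `x ≰ y'`. -/
theorem diamond_iff_star {P : Type*} [SemilatticeInf P] [OrderBot P] [Fintype P]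
    (rk : P → ℕ) (h0 : rk ⊥ = 0) (hc : CoverRank rk) (hm : RankStrictMono rk) :
    DiamondProp rk ↔
      ∀ xh x y : P, xh ⋖ x → xh < y →
        ∃ y' : P, xh ≤ y' ∧ y' ⋖ y ∧ ¬ x ≤ y' :=
  diamond_iff_star_general rk hc hm
end

section
/- If a ranked meet semi-lattice P satisfies the diamond property, then P satisfies the parallelogram property. -/
private lemma key_parallelogram {P : Type*} [SemilatticeInf P] (rk : P → ℕ)
    (hc : CoverRank rk) (hm : RankStrictMono rk) (hd : DiamondProp rk) :
    ∀ (n : ℕ) (y a b : P), rk y ≤ n → a ⋖ b → b < y →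
      ∃ y', y' ⋖ y ∧ a < y' ∧ ¬ b ≤ y' := by
  intro n
  induction n with
  | zero =>
    intro y a b hy hab hby
    have h1 := hm _ _ hby
    omega
  | succ n ih =>
    intro y a b hy hab hby
    have hby' : rk b < rk y := hm _ _ hby
    by_cases hbase : rk y = rk b + 1
    · -- base case: b ⋖ y; use the diamond on (a, y)
      have hay : a < y := hab.lt.trans hby
      have hrb : rk b = rk a + 1 := hc a b hab
      have hrk : rk y = rk a + 2 := by omega
      obtain ⟨p, q, hpq, hp, hq⟩ := hd a y hay hrk
      have pick : ∃ w, w ∈ Set.Ioo a y ∧ w ≠ b := by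
        by_cases h : p = b
        · exact ⟨q, hq, fun h' => hpq (h.trans h'.symm)⟩
        · exact ⟨p, hp, h⟩
      obtain ⟨w, hw, hwb⟩ := pick
      have hrw : rk w = rk a + 1 := by
        have := hm _ _ hw.1; have := hm _ _ hw.2; omega
      refine ⟨w, ⟨hw.2, fun v h1 h2 => ?_⟩, hw.1, fun hbw => ?_⟩
      · have := hm _ _ h1; have := hm _ _ h2; omega
      · rcases lt_or_eq_of_le hbw with h | h
        · have := hm _ _ h; omega
        · exact hwb h.symm
    · -- inductive step
      have hgap : rk b + 2 ≤ rk y := by omega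
      have hIoo : (Set.Ioo b y).Nonempty := by
        by_contra hcon
        have hcov : b ⋖ y := ⟨hby, fun c h1 h2 => hcon ⟨c, h1, h2⟩⟩
        have := hc b y hcov; omega
      -- pick z of maximal rank in [b, y)
      set S : Set P := {w | b ≤ w ∧ w < y} with hS
      have hSne : (rk '' S).Nonempty := ⟨rk b, b, ⟨le_refl b, hby⟩, rfl⟩
      have hSbdd : BddAbove (rk '' S) := by
        refine ⟨rk y, ?_⟩
        rintro _ ⟨w, hw, rfl⟩
        exact (hm _ _ hw.2).le
      obtain ⟨z, hzS, hzrk⟩ := Nat.sSup_mem hSne hSbdd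
      have hzmax : ∀ w, b ≤ w → w < y → rk w ≤ rk z := by
        intro w h1 h2
        rw [hzrk]
        exact le_csSup hSbdd ⟨w, ⟨h1, h2⟩, rfl⟩
      obtain ⟨c, hcIoo⟩ := hIoo
      have hbz : b < z := by
        rcases lt_or_eq_of_le hzS.1 with h | h
        · exact h
        · exfalso
          have h1 := hzmax c hcIoo.1.le hcIoo.2
          have h2 := hm _ _ hcIoo.1
          rw [← h] at h1
          omega
      have hzy : z < y := hzS.2
      have hzcov : z ⋖ y := by
        refine ⟨hzy, fun v h1 h2 => ?_⟩
        have := hzmax v (hzS.1.trans h1.le) h2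
        have := hm _ _ h1
        omega
      have hzn : rk z ≤ n := by have := hm _ _ hzy; omega
      obtain ⟨y'', h1, h2, h3⟩ := ih z a b hzn hab hbz
      -- climb back up using the diamond on (y'', y)
      have hy''y : y'' < y := h1.lt.trans hzy
      have hrz : rk z = rk y'' + 1 := hc _ _ h1
      have hrk2 : rk y = rk y'' + 2 := by have := hc _ _ hzcov; omega
      obtain ⟨p, q, hpq, hp, hq⟩ := hd y'' y hy''y hrk2
      have pick : ∃ w, w ∈ Set.Ioo y'' y ∧ w ≠ z := by
        by_cases h : p = z
        · exact ⟨q, hq, fun h' => hpq (h.trans h'.symm)⟩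
        · exact ⟨p, hp, h⟩
      obtain ⟨w, hw, hwz⟩ := pick
      have hrw : rk w = rk y'' + 1 := by
        have := hm _ _ hw.1; have := hm _ _ hw.2; omega
      refine ⟨w, ⟨hw.2, fun v hv1 hv2 => ?_⟩, h2.trans hw.1, fun hbw => ?_⟩
      · have := hm _ _ hv1; have := hm _ _ hv2; omega
      · -- if b ≤ w then b ≤ w ⊓ z = y'', contradiction
        have hinfz : w ⊓ z ≠ z := by
          intro h
          have hzw : z ≤ w := h ▸ inf_le_left
          rcases lt_or_eq_of_le hzw with h' | h'
          · have := hm _ _ h'; omega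
          · exact hwz h'.symm
        have hwzy : w ⊓ z = y'' := by
          have hle : y'' ≤ w ⊓ z := le_inf hw.1.le h1.lt.le
          rcases eq_or_lt_of_le hle with h | h
          · exact h.symm
          · exact absurd (lt_of_le_of_ne inf_le_right hinfz) (h1.2 h)
        exact h3 (hwzy ▸ le_inf hbw hzS.1)

/-- If a ranked meet semi-lattice satisfies the diamond property then it satisfies
the parallelogram property. -/
theorem parallelogram_of_diamond {P : Type*} [SemilatticeInf P] [OrderBot P]
    (rk : P → ℕ) (h0 : rk ⊥ = 0) (hc : CoverRank rk) (hm : RankStrictMono rk)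
    (hd : DiamondProp rk) : ParallelogramProp rk := by
  intro xh y r x hxy hr hx0 hcov hIcc hmax hrank i hi0 hir hiy hside
  have hmono : ∀ j, j ≤ r → x 0 ≤ x j := by
    intro j
    induction j with
    | zero => intro _; exact le_refl _
    | succ j ihj =>
      intro h
      exact (ihj (by omega)).trans (hcov j (by omega)).lt.le
  have hi1 : i - 1 + 1 = i := by omega
  have hcovi : x (i - 1) ⋖ x i := by
    have h := hcov (i - 1) (by omega)
    rwa [hi1] at h
  obtain ⟨y', h1, h2, h3⟩ :=
    key_parallelogram rk hc hm hd (rk y) y (x (i - 1)) (x i) le_rfl hcovi hiy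
  refine ⟨y', ?_, h1, h2, h3⟩
  rw [← hx0]
  exact (hmono (i - 1) (by omega)).trans h2.le
end

section
/- The divisibility poset of any multicomplex (order ideal of monomials in finitely many variables) is a ranked meet semi-lattice satisfying the parallelogram property. -/
section Aux

variable {n : ℕ} {M : Set (Fin n → ℕ)}

lemma aux_sum_lt {a b : Fin n → ℕ} (hle : a ≤ b) (hne : a ≠ b) :
    ∑ i, a i < ∑ i, b i := by
  obtain ⟨k, hk⟩ := Function.ne_iff.mp hne
  exact Finset.sum_lt_sum (fun i _ => hle i)
    ⟨k, Finset.mem_univ k, lt_of_le_of_ne (hle k) hk⟩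

lemma aux_single_of_sum {a b : Fin n → ℕ} (hle : a ≤ b)
    (hsum : ∑ i, b i = ∑ i, a i + 1) :
    ∃ k, b = a + Pi.single k 1 := by
  have hne : a ≠ b := by intro h; rw [h] at hsum; omega
  obtain ⟨k, hk⟩ := Function.ne_iff.mp hne
  have hklt : a k < b k := lt_of_le_of_ne (hle k) hk
  refine ⟨k, funext fun j => ?_⟩
  have hsplit : ∀ c : Fin n → ℕ, ∑ i, c i = c k + ∑ i ∈ Finset.univ.erase k, c i :=
    fun c => (Finset.add_sum_erase _ c (Finset.mem_univ k)).symm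
  have h1 := hsplit a; have h2 := hsplit b
  have herase : ∑ i ∈ Finset.univ.erase k, a i ≤ ∑ i ∈ Finset.univ.erase k, b i :=
    Finset.sum_le_sum (fun i _ => hle i)
  have hbk : b k = a k + 1 := by omega
  have herase' : ∑ i ∈ Finset.univ.erase k, b i = ∑ i ∈ Finset.univ.erase k, a i := by omega
  by_cases hj : j = k
  · subst hj; simp [hbk]
  · have : ∀ i ∈ Finset.univ.erase k, a i = b i := by
      intro i hi
      by_contra hne'
      have : ∑ i ∈ Finset.univ.erase k, a i < ∑ i ∈ Finset.univ.erase k, b i :=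
        Finset.sum_lt_sum (fun i _ => hle i) ⟨i, hi, lt_of_le_of_ne (hle i) hne'⟩
      omega
    have := (this j (Finset.mem_erase.mpr ⟨hj, Finset.mem_univ j⟩)).symm
    simpa [Pi.single_apply, hj] using this

lemma aux_exists_between (hdc : ∀ a b : Fin n → ℕ, a ≤ b → b ∈ M → a ∈ M)
    {a b : M} (hle : a.1 ≤ b.1) (hs : ∑ i, a.1 i + 1 < ∑ i, b.1 i) :
    ∃ c : M, a < c ∧ c < b := by
  have hne : a.1 ≠ b.1 := by intro h; rw [h] at hs; omega
  obtain ⟨k, hk⟩ := Function.ne_iff.mp hne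
  have hklt : a.1 k < b.1 k := lt_of_le_of_ne (hle k) hk
  set cf : Fin n → ℕ := a.1 + Pi.single k 1 with hcf
  have hcb : cf ≤ b.1 := by
    intro j
    by_cases hj : j = k
    · subst hj; simpa [cf, Pi.single_apply] using hklt
    · simpa [cf, Pi.single_apply, hj] using hle j
  have hcM : cf ∈ M := hdc _ _ hcb b.2
  have hcsum : ∑ i, cf i = ∑ i, a.1 i + 1 := by
    simp [cf, Finset.sum_add_distrib]
  refine ⟨⟨cf, hcM⟩, ?_, ?_⟩
  · refine lt_of_le_of_ne ?_ ?_
    · show a.1 ≤ cf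
      intro j; simp [cf]
    · intro h
      have : a.1 = cf := congrArg Subtype.val h
      rw [this] at hcsum; omega
  · refine lt_of_le_of_ne hcb ?_
    intro h
    have : cf = b.1 := congrArg Subtype.val h
    rw [this] at hcsum; omega

lemma aux_sum_of_cover (hdc : ∀ a b : Fin n → ℕ, a ≤ b → b ∈ M → a ∈ M)
    {a b : M} (h : a ⋖ b) : ∑ i, b.1 i = ∑ i, a.1 i + 1 := by
  have hlt : a.1 < b.1 := h.lt
  have h1 : ∑ i, a.1 i < ∑ i, b.1 i := aux_sum_lt hlt.le (fun he => hlt.ne he)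
  by_contra hne
  obtain ⟨c, hc1, hc2⟩ := aux_exists_between hdc hlt.le (by omega)
  exact h.2 hc1 hc2

lemma aux_cover_of {a b : M} (hle : a.1 ≤ b.1)
    (hs : ∑ i, b.1 i = ∑ i, a.1 i + 1) : a ⋖ b := by
  constructor
  · refine lt_of_le_of_ne hle ?_
    intro h; rw [show a.1 = b.1 from congrArg Subtype.val h] at hs; omega
  · intro c hac hcb
    have h1 : ∑ i, a.1 i < ∑ i, c.1 i :=
      aux_sum_lt hac.le (fun he => hac.ne (Subtype.ext he))
    have h2 : ∑ i, c.1 i < ∑ i, b.1 i :=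
      aux_sum_lt hcb.le (fun he => hcb.ne (Subtype.ext he))
    omega

lemma aux_cover_single (hdc : ∀ a b : Fin n → ℕ, a ≤ b → b ∈ M → a ∈ M)
    {a b : M} (h : a ⋖ b) : ∃ k, b.1 = a.1 + Pi.single k 1 :=
  aux_single_of_sum h.lt.le (aux_sum_of_cover hdc h)

end Aux
lemma aux_parallelogram {n : ℕ} {M : Set (Fin n → ℕ)}
    (hdc : ∀ a b : Fin n → ℕ, a ≤ b → b ∈ M → a ∈ M) :
    ParallelogramProp (fun m : M => ∑ i, m.1 i) := by
  intro xh y r x hxy hr hx0 hchain hIcc hmax hrk i hi0 hir hiy hcase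
  clear hrk hxy
  -- total degrees along the chain
  have hsum : ∀ t, t ≤ r → ∑ j, (x t).1 j = ∑ j, xh.1 j + t := by
    intro t
    induction t with
    | zero => intro _; rw [hx0]; simp
    | succ t ih =>
      intro h
      have hc := aux_sum_of_cover hdc (hchain t (by omega))
      rw [hc, ih (by omega)]
      omega
  -- monotonicity of the chain
  have hmono : ∀ t, t ≤ r → ∀ s, s ≤ t → x s ≤ x t := by
    intro t
    induction t with
    | zero => intro _ s hs; rw [Nat.le_zero.mp hs]
    | succ t ih =>
      intro ht s hs
      rcases Nat.lt_or_ge s (t + 1) with h | h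
      · exact le_trans (ih (by omega) s (by omega)) (hchain t (by omega)).lt.le
      · rw [show s = t + 1 by omega]
  -- the chain goes along a single coordinate k
  obtain ⟨k, hk1⟩ := aux_cover_single hdc (hchain 0 hr)
  have hline : ∀ j, j ≤ r → (x j).1 = xh.1 + Pi.single k j := by
    intro j
    induction j with
    | zero => intro _; rw [hx0]; simp
    | succ j ih =>
      intro hjr
      have ihj := ih (by omega)
      obtain ⟨m, hm⟩ := aux_cover_single hdc (hchain j (by omega))
      have hmk : m = k := by
        rcases Nat.eq_zero_or_pos j with rfl | hj
        · by_contra hne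
          have := congrFun (hk1.symm.trans hm) k
          simp [Pi.single_apply, Ne.symm hne] at this
        · by_contra hne
          set p : Fin n → ℕ := xh.1 + Pi.single m 1 with hp
          have hple : p ≤ (x (j + 1)).1 := by
            intro l
            rw [hm, ihj]
            simp only [hp, Pi.add_apply]
            omega
          have hxjr : (x (j + 1)).1 ≤ (x r).1 := hmono r le_rfl (j + 1) hjr
          have hpM : p ∈ M := hdc _ _ (le_trans hple hxjr) (x r).2
          have hmem : (⟨p, hpM⟩ : M) ∈ Set.Icc xh (x r) := by
            refine ⟨?_, le_trans hple hxjr⟩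
            intro l; simp [hp]
          rw [hIcc] at hmem
          obtain ⟨t, ht, hpt⟩ := hmem
          have hxt : (x t).1 = p := congrArg Subtype.val hpt.symm
          have hps : ∑ l, p l = ∑ l, xh.1 l + 1 := by
            simp [hp, Finset.sum_add_distrib, Pi.single_apply]
          have hst := hsum t ht
          rw [hxt, hps] at hst
          have ht1 : t = 1 := by omega
          rw [ht1] at hxt
          have hcontra := congrFun (hxt.symm.trans hk1) m
          rw [hx0] at hcontra
          simp [hp, Pi.single_apply, hne] at hcontra
      rw [hmk] at hm
      rw [hm, ihj]
      funext l
      simp only [Pi.add_apply, Pi.single_apply]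
      split_ifs <;> omega
  -- pointwise facts about y
  have hxiy : (x i).1 ≤ y.1 := hiy.le
  have hxhy : ∀ l, xh.1 l ≤ y.1 l := by
    intro l
    have := hxiy l
    rw [hline i hir] at this
    simp only [Pi.add_apply] at this
    omega
  have hylow : xh.1 k + i ≤ y.1 k := by
    have := hxiy k
    rw [hline i hir] at this
    simpa using this
  -- the key fact : y agrees with x i at coordinate k
  have hyk : y.1 k = xh.1 k + i := by
    rcases hcase with ⟨hir', hnle⟩ | ⟨hieq, hnch⟩
    · by_contra hne
      apply hnle
      show (x (i + 1)).1 ≤ y.1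
      rw [hline (i + 1) (by omega)]
      intro l
      simp only [Pi.add_apply, Pi.single_apply]
      by_cases hl : l = k
      · rw [hl, if_pos rfl]; omega
      · rw [if_neg hl]
        have := hxhy l
        omega
    · rw [hieq] at hylow ⊢
      by_contra hne
      have hyk' : xh.1 k + (r + 1) ≤ y.1 k := by omega
      set z : Fin n → ℕ := xh.1 + Pi.single k (r + 1) with hz
      have hzy : z ≤ y.1 := by
        intro l
        simp only [hz, Pi.add_apply, Pi.single_apply]
        by_cases hl : l = k
        · rw [hl, if_pos rfl]; omega
        · rw [if_neg hl]
          have := hxhy l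
          omega
      have hzM : z ∈ M := hdc _ _ hzy y.2
      have hxrz : x r < (⟨z, hzM⟩ : M) := by
        refine lt_of_le_of_ne ?_ ?_
        · show (x r).1 ≤ z
          rw [hline r le_rfl]
          intro l
          simp only [hz, Pi.add_apply, Pi.single_apply]
          split_ifs <;> omega
        · intro h
          have hck := congrFun (congrArg Subtype.val h) k
          rw [hline r le_rfl] at hck
          simp [hz, Pi.single_apply] at hck
      refine hmax ⟨z, hzM⟩ hxrz ?_
      intro p hp q hq _
      have hpk : ∀ l, l ≠ k → p.1 l = xh.1 l := by
        intro l hl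
        have h2 : p.1 l ≤ z l := hp.2 l
        have h1 : xh.1 l ≤ p.1 l := hp.1 l
        simp only [hz, Pi.add_apply, Pi.single_apply, if_neg hl] at h2
        omega
      have hqk : ∀ l, l ≠ k → q.1 l = xh.1 l := by
        intro l hl
        have h2 : q.1 l ≤ z l := hq.2 l
        have h1 : xh.1 l ≤ q.1 l := hq.1 l
        simp only [hz, Pi.add_apply, Pi.single_apply, if_neg hl] at h2
        omega
      rcases le_total (p.1 k) (q.1 k) with h | h
      · left
        show p.1 ≤ q.1
        intro l
        by_cases hl : l = k
        · subst hl; exact h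
        · rw [hpk l hl, hqk l hl]
      · right
        show q.1 ≤ p.1
        intro l
        by_cases hl : l = k
        · subst hl; exact h
        · rw [hpk l hl, hqk l hl]
  -- construct y'
  set yf : Fin n → ℕ := Function.update y.1 k (xh.1 k + (i - 1)) with hyf
  have hbound : xh.1 k + (i - 1) ≤ y.1 k := by omega
  have hyfy : yf ≤ y.1 := by
    intro l
    by_cases hl : l = k
    · rw [hyf, hl, Function.update_self]
      exact hbound
    · rw [hyf, Function.update_of_ne hl]
  have hyfM : yf ∈ M := hdc _ _ hyfy y.2
  have hsumy : ∑ l, y.1 l = ∑ l, yf l + 1 := by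
    have h1 : ∑ l, yf l = (xh.1 k + (i - 1)) + ∑ l ∈ Finset.univ.erase k, y.1 l := by
      rw [hyf, ← Finset.add_sum_erase _ _ (Finset.mem_univ k), Function.update_self,
        Finset.sum_congr rfl
          (fun l hl => Function.update_of_ne (Finset.mem_erase.mp hl).1 _ y.1)]
    have h2 : ∑ l, y.1 l = y.1 k + ∑ l ∈ Finset.univ.erase k, y.1 l :=
      (Finset.add_sum_erase _ _ (Finset.mem_univ k)).symm
    rw [h1, h2, hyk]
    omega
  refine ⟨⟨yf, hyfM⟩, ?_, aux_cover_of hyfy hsumy, ?_, ?_⟩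
  · show xh.1 ≤ yf
    intro l
    by_cases hl : l = k
    · rw [hl, hyf, Function.update_self]
      exact Nat.le_add_right _ _
    · rw [hyf, Function.update_of_ne hl]; exact hxhy l
  · -- x (i-1) < y'
    have hle : (x (i - 1)).1 ≤ yf := by
      rw [hline (i - 1) (by omega)]
      intro l
      simp only [Pi.add_apply, Pi.single_apply]
      by_cases hl : l = k
      · rw [hl, if_pos rfl, hyf, Function.update_self]
      · rw [if_neg hl, hyf, Function.update_of_ne hl]
        have := hxhy l
        omega
    refine lt_of_le_of_ne hle ?_
    intro heq
    obtain ⟨l, hl⟩ := Function.ne_iff.mp (fun h : (x i).1 = y.1 => hiy.ne (Subtype.ext h))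
    have hlk : l ≠ k := by
      intro h; subst h
      apply hl
      rw [hline i hir, hyk]
      simp
    have hxil : (x i).1 l < y.1 l := lt_of_le_of_ne (hxiy l) hl
    have hval := congrFun (congrArg Subtype.val heq) l
    rw [hline (i - 1) (by omega)] at hval
    rw [hline i hir] at hxil
    simp only [Pi.add_apply, Pi.single_apply, if_neg hlk] at hval hxil
    rw [hyf, Function.update_of_ne hlk] at hval
    omega
  · -- ¬ x i ≤ y'
    intro h
    have h' : (x i).1 ≤ yf := h
    have hk' : (x i).1 k ≤ yf k := h' k
    have h2 : yf k = xh.1 k + (i - 1) := by rw [hyf]; simp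
    have h3 : (x i).1 k = xh.1 k + i := by rw [hline i hir]; simp
    rw [h2, h3] at hk'
    omega

/-- The divisibility poset of a multicomplex (a set of exponent vectors closed
under divisibility, i.e. under the pointwise order), ranked by total degree, is a
ranked meet semi-lattice (meets being gcd's, i.e. pointwise min) satisfying the
parallelogram property. -/
theorem multicomplex_parallelogram {n : ℕ} (M : Set (Fin n → ℕ))
    (hne : M.Nonempty)
    (hdc : ∀ a b : Fin n → ℕ, a ≤ b → b ∈ M → a ∈ M) :
    (∀ x y : M, IsGLB ({x, y} : Set M)
      ⟨fun i => min (x.1 i) (y.1 i), hdc _ x.1 (fun i => min_le_left _ _) x.2⟩) ∧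
    CoverRank (fun m : M => ∑ i, m.1 i) ∧
    RankStrictMono (fun m : M => ∑ i, m.1 i) ∧
    ParallelogramProp (fun m : M => ∑ i, m.1 i) := by
  refine ⟨?_, ?_, ?_, aux_parallelogram hdc⟩
  · intro x y
    constructor
    · rintro z hz
      rcases hz with rfl | rfl
      · intro i; exact min_le_left _ _
      · intro i; exact min_le_right _ _
    · intro z hz
      have hx : z ≤ x := hz (Set.mem_insert _ _)
      have hy : z ≤ y := hz (Set.mem_insert_of_mem _ rfl)
      intro i; exact le_min (hx i) (hy i)
  · intro a b hab
    exact aux_sum_of_cover hdc hab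
  · intro a b hab
    exact aux_sum_lt hab.le (fun he => hab.ne (Subtype.ext he))
end

section
/- Let L be a finite ranked atomic meet semi-lattice with rank function r. L is geometric (i.e., r(x ∧ y) + r(x ∨ y) ≤ r(x) + r(y) whenever x ∨ y exists) if and only if for every l ∈ L and every minimal set S of atoms with ∨S = l (minimal meaning ∨T < l for every proper subset T of S), one has r(l) = |S|. -/
/-- Atomic: every element is the join of the atoms (rank-1 elements) below it. -/
def AtomicRk {L : Type*} [PartialOrder L] (rk : L → ℕ) : Prop :=
  ∀ l : L, IsLUB {a : L | rk a = 1 ∧ a ≤ l} l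

section
variable {L : Type*} [SemilatticeInf L] [OrderBot L] [Fintype L]

/-- In a finite meet-semilattice, any set with an upper bound has a LUB. -/
lemma exists_lub_of_bdd (S : Set L) (u : L) (hu : u ∈ upperBounds S) :
    ∃ j, IsLUB S j := by
  classical
  set U : Finset L := Finset.univ.filter (fun v => v ∈ upperBounds S) with hU
  have hne : U.Nonempty := ⟨u, by simp [hU, hu]⟩
  refine ⟨U.inf' hne id, ?_, ?_⟩
  · intro s hs
    exact Finset.le_inf' hne id fun v hv =>
      (by simpa [hU] using hv : v ∈ upperBounds S) hs
  · intro v hv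
    exact Finset.inf'_le id (by simp [hU, hv])

/-- Any finset spanning `l` contains a minimal spanning subset. -/
lemma exists_minimal_spanning (l : L) :
    ∀ Z : Finset L, IsLUB (↑Z : Set L) l →
      ∃ U, U ⊆ Z ∧ IsLUB (↑U : Set L) l ∧
        ∀ T : Finset L, T ⊂ U → ∀ m : L, IsLUB (↑T : Set L) m → m < l := by
  intro Z
  induction Z using Finset.strongInduction with
  | _ Z ih =>
    intro hZ
    by_cases h : ∀ T : Finset L, T ⊂ Z → ∀ m : L, IsLUB (↑T : Set L) m → m < l
    · exact ⟨Z, subset_rfl, hZ, h⟩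
    · push_neg at h
      obtain ⟨T, hTZ, m, hTm, hml⟩ := h
      have hm_le : m ≤ l := hTm.2 (fun s hs => hZ.1 (hTZ.1 hs))
      have hml' : m = l := hm_le.lt_or_eq.resolve_left hml
      obtain ⟨U, hU, rest⟩ := ih T hTZ (hml' ▸ hTm)
      exact ⟨U, hU.trans hTZ.subset, rest⟩

end

section
variable {L : Type*} [SemilatticeInf L] [OrderBot L] [Fintype L]

set_option linter.unusedSectionVars false

/-- Minimal spanning sets have cardinality at most the rank. -/
lemma card_le_rk (rk : L → ℕ) (hm : RankStrictMono rk) :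
    ∀ S : Finset L, ∀ l : L, IsLUB (↑S : Set L) l →
      (∀ T : Finset L, T ⊂ S → ∀ m : L, IsLUB (↑T : Set L) m → m < l) →
      S.card ≤ rk l := by
  intro S
  induction S using Finset.strongInduction with
  | _ S ih =>
    intro l hSl hSmin
    rcases S.eq_empty_or_nonempty with rfl | ⟨a, ha⟩
    · simp
    · classical
      set S' := S.erase a with hS'
      have hS'sub : S' ⊂ S := Finset.erase_ssubset ha
      obtain ⟨m, hmS'⟩ := exists_lub_of_bdd (↑S' : Set L) l
        (fun s hs => hSl.1 (hS'sub.subset hs))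
      have hml : m < l := hSmin S' hS'sub m hmS'
      -- S' is a minimal spanning set for m
      have hS'min : ∀ T : Finset L, T ⊂ S' → ∀ m' : L, IsLUB (↑T : Set L) m' → m' < m := by
        intro T hTS' m' hTm'
        have hle : m' ≤ m := hTm'.2 (fun s hs => hmS'.1 (hTS'.subset hs))
        rcases hle.lt_or_eq with h | rfl
        · exact h
        · exfalso
          -- then insert a T is a proper subset of S whose LUB is l
          obtain ⟨s, hsS', hsT⟩ := Finset.exists_of_ssubset hTS'
          have hTsubS : insert a T ⊆ S :=
            Finset.insert_subset ha ((hTS'.subset.trans hS'sub.subset))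
          have hprop : insert a T ⊂ S := by
            refine Finset.ssubset_iff_of_subset hTsubS |>.mpr ⟨s, hS'sub.subset hsS', ?_⟩
            simp only [Finset.mem_insert]
            rintro (rfl | h)
            · exact (Finset.ne_of_mem_erase hsS') rfl
            · exact hsT h
          have hlub : IsLUB (↑(insert a T) : Set L) l := by
            constructor
            · intro s hs
              simp only [Finset.coe_insert, Set.mem_insert_iff] at hs
              rcases hs with rfl | hs
              · exact hSl.1 ha
              · exact hSl.1 (hS'sub.subset (hTS'.subset hs))
            · intro u hu
              have hum' : m' ≤ u := hTm'.2 (fun s hs => hu (by simp [hs]))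
              refine hSl.2 ?_
              intro s hs
              rcases eq_or_ne s a with rfl | hsa
              · exact hu (by simp)
              · exact le_trans (hmS'.1 (by simpa [hS', Finset.mem_erase, hsa] using hs)) hum'
          exact lt_irrefl l (hSmin _ hprop l hlub)
      have hIH := ih S' hS'sub m hmS' hS'min
      have h1 : S'.card = S.card - 1 := Finset.card_erase_of_mem ha
      have h2 : 1 ≤ S.card := Finset.card_pos.mpr ⟨a, ha⟩
      have h3 : rk m < rk l := hm m l hml
      omega

end

section
variable {L : Type*} [SemilatticeInf L] [OrderBot L] [Fintype L]
set_option linter.unusedSectionVars false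

/-- Under submodularity, the rank of a join of atoms is at most the number of atoms. -/
lemma rk_le_card (rk : L → ℕ) (h0 : rk ⊥ = 0)
    (hsub : ∀ x y j : L, IsLUB ({x, y} : Set L) j → rk (x ⊓ y) + rk j ≤ rk x + rk y) :
    ∀ S : Finset L, (∀ a ∈ S, rk a = 1) → ∀ l : L, IsLUB (↑S : Set L) l →
      rk l ≤ S.card := by
  classical
  intro S
  induction S using Finset.induction_on with
  | empty =>
    intro _ l hl
    have : l ≤ ⊥ := hl.2 (by intro u hu; exact absurd hu (by simp))
    simp [le_bot_iff.mp this, h0]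
  | @insert a S ha ih =>
    intro hatoms l hl
    have hub : l ∈ upperBounds (↑S : Set L) := fun s hs => hl.1 (by simp [hs])
    obtain ⟨m, hmS⟩ := exists_lub_of_bdd (↑S : Set L) l hub
    have hml : m ≤ l := hmS.2 hub
    have hal : a ≤ l := hl.1 (by simp)
    have hlub2 : IsLUB ({m, a} : Set L) l := by
      constructor
      · rintro s (rfl | rfl)
        · exact hml
        · exact hal
      · intro u hu
        have hmu : m ≤ u := hu (by simp)
        have hau : a ≤ u := hu (by simp)
        refine hl.2 ?_
        intro s hs
        simp only [Finset.coe_insert, Set.mem_insert_iff] at hs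
        rcases hs with rfl | hs
        · exact hau
        · exact le_trans (hmS.1 hs) hmu
    have hkey := hsub m a l hlub2
    have hra : rk a = 1 := hatoms a (Finset.mem_insert_self a S)
    have hIH := ih (fun b hb => hatoms b (Finset.mem_insert_of_mem hb)) m hmS
    have hcard : (insert a S).card = S.card + 1 := Finset.card_insert_of_notMem ha
    omega

end

section
variable {L : Type*} [SemilatticeInf L] [OrderBot L] [Fintype L]
variable [DecidableEq L]
set_option linter.unusedSectionVars false

/-- One step of extending a minimal spanning set of atoms by a new atom. -/
lemma extend_step (rk : L → ℕ) (hm : RankStrictMono rk)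
    (H : ∀ (l : L) (S : Finset L), (∀ a ∈ S, rk a = 1) → IsLUB (↑S : Set L) l →
      (∀ T : Finset L, T ⊂ S → ∀ m : L, IsLUB (↑T : Set L) m → m < l) →
      rk l = S.card)
    (W : Finset L) (m : L) (hWa : ∀ b ∈ W, rk b = 1)
    (hWl : IsLUB (↑W : Set L) m)
    (hWmin : ∀ T : Finset L, T ⊂ W → ∀ m' : L, IsLUB (↑T : Set L) m' → m' < m)
    (a : L) (hra : rk a = 1) (ham : ¬ a ≤ m)
    (x : L) (hx : x ∈ upperBounds (↑(insert a W) : Set L)) :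
    ∃ m₁ : L, IsLUB (↑(insert a W) : Set L) m₁ ∧ m < m₁ ∧
      (∀ T : Finset L, T ⊂ insert a W → ∀ m' : L, IsLUB (↑T : Set L) m' → m' < m₁) := by
  classical
  have haW : a ∉ W := fun h => ham (hWl.1 (by simp [h]))
  obtain ⟨m₁, hm₁⟩ := exists_lub_of_bdd (↑(insert a W) : Set L) x hx
  have hWsub : (↑W : Set L) ⊆ (↑(insert a W) : Set L) := by
    intro s hs; simp only [Finset.coe_insert, Set.mem_insert_iff]; right; exact hs
  have hmm₁ : m ≤ m₁ := hWl.2 (fun s hs => hm₁.1 (hWsub hs))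
  have ham₁ : a ≤ m₁ := hm₁.1 (by simp)
  have hlt : m < m₁ := lt_of_le_of_ne hmm₁ (fun h => ham (h ▸ ham₁))
  refine ⟨m₁, hm₁, hlt, ?_⟩
  intro T hT m' hTm'
  have hTatoms : ∀ b ∈ T, rk b = 1 := by
    intro b hb
    rcases Finset.mem_insert.mp (hT.subset hb) with rfl | hbW
    · exact hra
    · exact hWa b hbW
  have hm'le : m' ≤ m₁ := hTm'.2 (fun s hs => hm₁.1 (by
    simpa using hT.subset (by simpa using hs)))
  rcases hm'le.lt_or_eq with h | rfl
  · exact h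
  · exfalso
    -- m' = m₁ : derive a rank contradiction
    obtain ⟨V, hVT, hVlub, hVmin⟩ := exists_minimal_spanning m' T hTm'
    have hrkV : rk m' = V.card :=
      H m' V (fun b hb => hTatoms b (hVT hb)) hVlub hVmin
    have hrkW : rk m = W.card := H m W hWa hWl hWmin
    have hcardT : T.card < (insert a W).card := Finset.card_lt_card hT
    have hcardI : (insert a W).card = W.card + 1 := Finset.card_insert_of_notMem haW
    have hVle : V.card ≤ T.card := Finset.card_le_card hVT
    have := hm m m' hlt
    omega

end

section
variable {L : Type*} [SemilatticeInf L] [OrderBot L] [Fintype L] [DecidableEq L]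
set_option linter.unusedSectionVars false

/-- Any minimal spanning set of atoms below `x` extends to a minimal
spanning set of atoms for `x`. -/
lemma extend_to_spanning (rk : L → ℕ) (hm : RankStrictMono rk) (hat : AtomicRk rk)
    (H : ∀ (l : L) (S : Finset L), (∀ a ∈ S, rk a = 1) → IsLUB (↑S : Set L) l →
      (∀ T : Finset L, T ⊂ S → ∀ m : L, IsLUB (↑T : Set L) m → m < l) →
      rk l = S.card) :
    ∀ k : ℕ, ∀ m x : L, rk x - rk m ≤ k → m ≤ x →
      ∀ W : Finset L, (∀ b ∈ W, rk b = 1) → IsLUB (↑W : Set L) m →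
      (∀ T : Finset L, T ⊂ W → ∀ m' : L, IsLUB (↑T : Set L) m' → m' < m) →
      ∃ S : Finset L, W ⊆ S ∧ (∀ b ∈ S, rk b = 1) ∧ IsLUB (↑S : Set L) x ∧
        (∀ T : Finset L, T ⊂ S → ∀ m' : L, IsLUB (↑T : Set L) m' → m' < x) := by
  intro k
  induction k with
  | zero =>
    intro m x hk hmx W hWa hWl hWmin
    have : ¬ m < x := fun h => by have := hm m x h; omega
    have hmx' : m = x := hmx.lt_or_eq.resolve_left this
    exact ⟨W, subset_rfl, hWa, hmx' ▸ hWl, hmx' ▸ hWmin⟩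
  | succ k ih =>
    intro m x hk hmx W hWa hWl hWmin
    rcases hmx.lt_or_eq with hlt | rfl
    · -- find an atom below x not below m
      have hxlub := hat x
      have : ∃ a : L, (rk a = 1 ∧ a ≤ x) ∧ ¬ a ≤ m := by
        by_contra hcon
        push_neg at hcon
        have : x ≤ m := hxlub.2 (fun a ha => hcon a ha)
        exact absurd (le_antisymm this hmx) (ne_of_lt hlt).symm
      obtain ⟨a, ⟨hra, hax⟩, ham⟩ := this
      have hx : x ∈ upperBounds (↑(insert a W) : Set L) := by
        intro s hs
        simp only [Finset.coe_insert, Set.mem_insert_iff] at hs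
        rcases hs with rfl | hs
        · exact hax
        · exact le_trans (hWl.1 hs) hmx
      obtain ⟨m₁, hm₁lub, hmm₁, hm₁min⟩ :=
        extend_step rk hm H W m hWa hWl hWmin a hra ham x hx
      have hm₁x : m₁ ≤ x := hm₁lub.2 hx
      have hr1 : rk m < rk m₁ := hm m m₁ hmm₁
      have hr2 : rk m₁ ≤ rk x := by
        rcases hm₁x.lt_or_eq with h | rfl
        · exact (hm _ _ h).le
        · exact le_rfl
      have hatoms : ∀ b ∈ insert a W, rk b = 1 := by
        intro b hb
        rcases Finset.mem_insert.mp hb with rfl | hbW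
        · exact hra
        · exact hWa b hbW
      obtain ⟨S, hS1, hS2, hS3, hS4⟩ :=
        ih m₁ x (by omega) hm₁x (insert a W) hatoms hm₁lub hm₁min
      exact ⟨S, (Finset.subset_insert a W).trans hS1, hS2, hS3, hS4⟩
    · exact ⟨W, subset_rfl, hWa, hWl, hWmin⟩

end

/-- A finite ranked atomic meet semi-lattice is geometric (rank is submodular on
existing joins) iff for every `l` and every minimal set `S` of atoms with
`∨S = l` one has `rk l = |S|`. -/
theorem geometric_iff_minimal_atom_sets {L : Type*} [SemilatticeInf L] [OrderBot L]
    [Fintype L] (rk : L → ℕ) (h0 : rk ⊥ = 0) (hc : CoverRank rk)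
    (hm : RankStrictMono rk) (hat : AtomicRk rk) :
    (∀ x y j : L, IsLUB ({x, y} : Set L) j → rk (x ⊓ y) + rk j ≤ rk x + rk y) ↔
    (∀ (l : L) (S : Finset L), (∀ a ∈ S, rk a = 1) → IsLUB (↑S : Set L) l →
      (∀ T : Finset L, T ⊂ S → ∀ m : L, IsLUB (↑T : Set L) m → m < l) →
      rk l = S.card) := by
  classical
  constructor
  · intro hsub l S hSa hSl hSmin
    have h1 := card_le_rk rk hm S l hSl hSmin
    have h2 := rk_le_card rk h0 hsub S hSa l hSl
    omega
  · intro H x y j hj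
    have hatm := hat (x ⊓ y)
    set A : Finset L := Finset.univ.filter (fun a => rk a = 1 ∧ a ≤ x ⊓ y) with hA
    have hAcoe : (↑A : Set L) = {a : L | rk a = 1 ∧ a ≤ x ⊓ y} := by
      ext a; simp [hA]
    have hAlub : IsLUB (↑A : Set L) (x ⊓ y) := hAcoe ▸ hatm
    obtain ⟨W, hWA, hWlub, hWmin⟩ := exists_minimal_spanning (x ⊓ y) A hAlub
    have hWa : ∀ b ∈ W, rk b = 1 := fun b hb =>
      ((Finset.mem_filter.mp (hWA hb)).2).1
    obtain ⟨S, hWS, hSa, hSlub, hSmin⟩ :=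
      extend_to_spanning rk hm hat H (rk x - rk (x ⊓ y)) (x ⊓ y) x le_rfl
        inf_le_left W hWa hWlub hWmin
    obtain ⟨T, hWT, hTa, hTlub, hTmin⟩ :=
      extend_to_spanning rk hm hat H (rk y - rk (x ⊓ y)) (x ⊓ y) y le_rfl
        inf_le_right W hWa hWlub hWmin
    have hxj : x ≤ j := hj.1 (by simp)
    have hyj : y ≤ j := hj.1 (by simp)
    have hSTlub : IsLUB (↑(S ∪ T) : Set L) j := by
      constructor
      · intro s hs
        rcases Finset.mem_union.mp (by simpa using hs) with h | h
        · exact le_trans (hSlub.1 h) hxj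
        · exact le_trans (hTlub.1 h) hyj
      · intro u hu
        have hxu : x ≤ u := hSlub.2 (fun s hs => hu (by
          simpa using Finset.mem_union_left T (by simpa using hs)))
        have hyu : y ≤ u := hTlub.2 (fun s hs => hu (by
          simpa using Finset.mem_union_right S (by simpa using hs)))
        refine hj.2 ?_
        rintro s (rfl | rfl)
        · exact hxu
        · exact hyu
    obtain ⟨U, hUST, hUlub, hUmin⟩ := exists_minimal_spanning j (S ∪ T) hSTlub
    have hUa : ∀ b ∈ U, rk b = 1 := by
      intro b hb
      rcases Finset.mem_union.mp (hUST hb) with h | h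
      · exact hSa b h
      · exact hTa b h
    have hrkU : rk j = U.card := H j U hUa hUlub hUmin
    have hrkS : rk x = S.card := H x S hSa hSlub hSmin
    have hrkT : rk y = T.card := H y T hTa hTlub hTmin
    have hrkW : rk (x ⊓ y) = W.card := H (x ⊓ y) W hWa hWlub hWmin
    have hWST : W ⊆ S ∩ T := Finset.subset_inter hWS hWT
    have hcard := Finset.card_union_add_card_inter S T
    have h1 : U.card ≤ (S ∪ T).card := Finset.card_le_card hUST
    have h2 : W.card ≤ (S ∩ T).card := Finset.card_le_card hWST
    omega
end

section
/- Let L be a finite ranked atomic geometric meet semi-lattice, let k be a field of characteristic 2, and let ⋀L = ⋀V / I_L be the quotient of the exterior algebra on the k-vector space V with basis {e_u : u atom of L} by the ideal I_L = I_1 + I_2 + I_3. Then the dimension of the degree-i graded component of ⋀L equals the number of elements of L of rank i. -/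
/-!
In characteristic 2 the exterior algebra is commutative and the monomials `e_S` form a basis, with
`e_S e_T = e_{S ∪ T}` for disjoint `S`, `T` and `e_S e_T = 0` otherwise. Call a set `S` of atoms
independent if `∨S` exists in `L` and has rank `|S|`. Semimodularity gives `r(∨S) ≤ |S|`, hence
subsets of independent sets are independent; and joining an independent set with an atom outside
its join raises the rank by exactly one, so greedily every `l` is the join of an independent set
`rep l` of size `r(l)`.

Modulo `I_L` every `e_S` is `0` (for dependent `S`) or `e_{rep (∨S)}`, so the classes of the
`e_{rep l}` with `r(l) = i` span the degree-`i` part. They are linearly independent because the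
linear map sending `e_S` to `e_{rep (∨S)}` for independent `S` and to `0` otherwise fixes every
`e_{rep l}` and kills `I_L`: independent `S`, `T` with the same join give `S ∪ U`, `T ∪ U` with
the same join, so `e_S e_U` and `e_T e_U` have the same image.
-/

namespace ExteriorAlgebra

section CharTwo

variable {R M : Type*} [CommRing R] [CharP R 2] [AddCommGroup M] [Module R M]

theorem commute_ι_ι_of_charTwo (u v : M) : Commute (ι R u) (ι R v) := by
  have h := eq_neg_of_add_eq_zero_left (ι_add_mul_swap (R := R) u v)
  rwa [← neg_one_smul R, CharTwo.neg_eq, one_smul] at h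

theorem commute_of_charTwo (x y : ExteriorAlgebra R M) : Commute x y := by
  have commute_ι (u : M) (y : ExteriorAlgebra R M) : Commute (ι R u) y := by
    induction y using ExteriorAlgebra.induction with
    | algebraMap r => exact Algebra.commute_algebraMap_right r _
    | ι v => exact commute_ι_ι_of_charTwo u v
    | mul a b ha hb => exact ha.mul_right hb
    | add a b ha hb => exact ha.add_right hb
  induction x using ExteriorAlgebra.induction with
  | algebraMap r => exact Algebra.commute_algebraMap_left r y
  | ι u => exact commute_ι u y
  | mul a b ha hb => exact ha.mul_left hb
  | add a b ha hb => exact ha.add_left hb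

variable (R) {α : Type*} [DecidableEq α]

noncomputable def wedge (S : Finset α) : ExteriorAlgebra R (α → R) :=
  (S.toList.map fun a => ι R (Pi.single a (1 : R))).prod

variable {R}

theorem wedge_eq_prod_of_perm {S : Finset α} {l : List α} (h : l.Perm S.toList) :
    wedge R S = (l.map fun a => ι R (Pi.single a (1 : R))).prod :=
  ((h.map _).prod_eq' <| List.pairwise_map.2 <|
    List.pairwise_iff_forall_sublist.2 fun _ => commute_ι_ι_of_charTwo _ _).symm

theorem wedge_insert {a : α} {S : Finset α} (ha : a ∉ S) :
    wedge R (insert a S) = ι R (Pi.single a 1) * wedge R S := by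
  rw [wedge_eq_prod_of_perm (Finset.toList_insert ha).symm, List.map_cons, List.prod_cons, wedge]

theorem ι_mul_wedge_of_mem {a : α} {S : Finset α} (ha : a ∈ S) :
    ι R (Pi.single a 1) * wedge R S = 0 := by
  rw [← Finset.insert_erase ha, wedge_insert (Finset.notMem_erase a S), ← mul_assoc,
    ι_sq_zero, zero_mul]

theorem wedge_mul_wedge (S T : Finset α) :
    wedge R S * wedge R T = if Disjoint S T then wedge R (S ∪ T) else 0 := by
  induction S using Finset.induction_on with
  | empty => simp [wedge]
  | @insert a S ha ih =>
    rw [wedge_insert ha, mul_assoc, ih]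
    by_cases haT : a ∈ T
    · rw [if_neg (Finset.not_disjoint_iff.2 ⟨a, Finset.mem_insert_self a S, haT⟩)]
      split_ifs
      · exact ι_mul_wedge_of_mem (Finset.mem_union_right S haT)
      · exact mul_zero _
    · simp only [Finset.disjoint_insert_left, haT, not_false_eq_true, true_and,
        Finset.insert_union]
      split_ifs
      · rw [wedge_insert (by simp [ha, haT])]
      · exact mul_zero _

theorem wedge_eq_basisFun_exteriorAlgebra [Fintype α] [LinearOrder α] (S : Finset α) :
    wedge R S = (Pi.basisFun R α).ExteriorAlgebra S := by
  rw [basis_apply_ofCard _ rfl, ιMulti_family, ιMulti_apply,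
    wedge_eq_prod_of_perm (Finset.sort_perm_toList S (· ≤ ·))]
  congr 1
  apply List.ext_getElem (by simp)
  intro n h1 h2
  simp [Set.powersetCard.ofFinEmbEquiv_symm_apply, Finset.orderEmbOfFin_apply]

variable [Finite α]

theorem exists_basis_coe_eq_wedge :
    ∃ b : Module.Basis (Finset α) R (ExteriorAlgebra R (α → R)), ⇑b = wedge R := by
  obtain ⟨_, -⟩ := exists_wellFoundedLT α
  have := Fintype.ofFinite α
  exact ⟨_, funext fun S => (wedge_eq_basisFun_exteriorAlgebra S).symm⟩

variable (R α) in
noncomputable def wedgeBasis : Module.Basis (Finset α) R (ExteriorAlgebra R (α → R)) :=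
  exists_basis_coe_eq_wedge.choose

@[simp] theorem coe_wedgeBasis : ⇑(wedgeBasis R α) = wedge R :=
  exists_basis_coe_eq_wedge.choose_spec

theorem range_ι_pow_eq_span_wedge (n : ℕ) :
    LinearMap.range (ι R : (α → R) →ₗ[R] ExteriorAlgebra R (α → R)) ^ n =
      Submodule.span R (wedge R '' {S | S.card = n}) := by
  obtain ⟨_, -⟩ := exists_wellFoundedLT α
  have := Fintype.ofFinite α
  rw [← exteriorPower,
    ← exteriorPower.ιMulti_family_span_fixedDegree_of_span R (Pi.basisFun R α).span_eq]
  congr 1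
  ext x
  simp only [Set.mem_range, Set.mem_image, Set.mem_ofPred_eq]
  constructor
  · rintro ⟨S, rfl⟩
    exact ⟨S, S.2, by rw [wedge_eq_basisFun_exteriorAlgebra, basis_apply_powersetCard]⟩
  · rintro ⟨S, hS, rfl⟩
    refine ⟨⟨S, hS⟩, ?_⟩
    rw [wedge_eq_basisFun_exteriorAlgebra, ← basis_apply_powersetCard]

end CharTwo

end ExteriorAlgebra

theorem LinearIndependent.mkQ_of_le_ker {ι K V W : Type*} [Ring K] [AddCommGroup V] [Module K V]
    [AddCommGroup W] [Module K W] {v : ι → V} {p : Submodule K V} {f : V →ₗ[K] W}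
    (hv : LinearIndependent K (f ∘ v)) (hp : p ≤ LinearMap.ker f) :
    LinearIndependent K (p.mkQ ∘ v) :=
  LinearIndependent.of_comp (p.liftQ f hp) hv

theorem IsLUB.isLUB_union_iff {P : Type*} [Preorder P] {s t : Set P} {l m : P} (hs : IsLUB s l) :
    IsLUB (s ∪ t) m ↔ IsLUB (insert l t) m := by
  simp only [IsLUB, upperBounds_union, upperBounds_insert, hs.upperBounds_eq]

section Lattice

variable {L : Type*} [SemilatticeInf L]

def RankSubmodular (rk : L → ℕ) : Prop :=
  ∀ x y j : L, IsLUB ({x, y} : Set L) j → rk (x ⊓ y) + rk j ≤ rk x + rk y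

abbrev Atom (rk : L → ℕ) := {a : L // rk a = 1}

variable {rk : L → ℕ}

theorem isLUB_image_union_congr [DecidableEq L] {S S' U : Finset (Atom rk)} {l m : L}
    (hS : IsLUB (Subtype.val '' (S : Set (Atom rk))) l)
    (hS' : IsLUB (Subtype.val '' (S' : Set (Atom rk))) l) :
    IsLUB (Subtype.val '' (↑(S ∪ U) : Set (Atom rk))) m ↔
      IsLUB (Subtype.val '' (↑(S' ∪ U) : Set (Atom rk))) m := by
  simp only [Finset.coe_union, Set.image_union, hS.isLUB_union_iff, hS'.isLUB_union_iff]

variable [Finite L]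

theorem exists_isLUB_of_bddAbove {s : Set L} (hs : BddAbove s) : ∃ m, IsLUB s m := by
  obtain ⟨m, hm, hmin⟩ := (Set.toFinite (upperBounds s)).exists_minimal hs
  exact ⟨m, hm, fun u hu =>
    (hmin (fun x hx => le_inf (hm hx) (hu hx)) inf_le_left).trans inf_le_right⟩

theorem rank_le_add_card_of_isLUB_union [DecidableEq L] (hgeo : RankSubmodular rk)
    {S D : Finset (Atom rk)} {l m : L} (hl : IsLUB (Subtype.val '' (S : Set (Atom rk))) l)
    (hm : IsLUB (Subtype.val '' (↑(S ∪ D) : Set (Atom rk))) m) : rk m ≤ rk l + D.card := by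
  induction D using Finset.induction_on generalizing m with
  | empty => simp [hm.unique (by simpa using hl)]
  | @insert a D ha ih =>
    rw [Finset.union_insert, Finset.coe_insert, Set.image_insert_eq, Set.insert_eq,
      Set.union_comm] at hm
    obtain ⟨m', hm'⟩ :=
      exists_isLUB_of_bddAbove ⟨m, upperBounds_mono_set Set.subset_union_left hm.1⟩
    have hpair := hgeo m' a m (hm'.isLUB_union_iff.1 hm)
    have := ih hm'
    rw [a.2] at hpair
    rw [Finset.card_insert_of_notMem ha]
    omega

variable [OrderBot L]

theorem rank_le_card_of_isLUB (h0 : rk ⊥ = 0) (hgeo : RankSubmodular rk)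
    {S : Finset (Atom rk)} {m : L} (hm : IsLUB (Subtype.val '' (S : Set (Atom rk))) m) :
    rk m ≤ S.card := by
  classical
  have := rank_le_add_card_of_isLUB_union hgeo (S := ∅) (l := ⊥) (by simp) (by simpa using hm)
  omega

theorem exists_isLUB_card_eq_rank [DecidableEq L] (h0 : rk ⊥ = 0) (hm : RankStrictMono rk)
    (hat : AtomicRk rk) (hgeo : RankSubmodular rk) (l : L) :
    ∃ S : Finset (Atom rk), IsLUB (Subtype.val '' (S : Set (Atom rk))) l ∧ S.card = rk l := by
  let P : Set L := {m | m ≤ l ∧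
    ∃ S : Finset (Atom rk), IsLUB (Subtype.val '' (S : Set (Atom rk))) m ∧ S.card = rk m}
  obtain ⟨m, ⟨hml, S, hS, hcard⟩, hmax⟩ :=
    (Set.toFinite P).exists_maximal ⟨⊥, bot_le, ∅, by simp, by simp [h0]⟩
  obtain rfl | hlt := hml.eq_or_lt
  · exact ⟨S, hS, hcard⟩
  obtain ⟨a, ⟨ha, hal⟩, ham⟩ : ∃ a ∈ {a | rk a = 1 ∧ a ≤ l}, ¬ a ≤ m := by
    by_contra! h
    exact hlt.not_ge ((hat l).2 h)
  obtain ⟨j, hj⟩ := exists_isLUB_of_bddAbove (s := {m, a}) ⟨l, by simp [hml, hal]⟩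
  have hmj : m < j := (hj.1 (by simp)).lt_of_ne fun h => ham (h ▸ hj.1 (by simp))
  have haS : (⟨a, ha⟩ : Atom rk) ∉ S := fun h => ham (hS.1 ⟨_, h, rfl⟩)
  have hjP : j ∈ P := by
    refine ⟨hj.2 (by simp [hml, hal]), insert ⟨a, ha⟩ S, ?_, ?_⟩
    · rw [Finset.coe_insert, Set.image_insert_eq, Set.insert_eq, Set.union_comm]
      exact hS.isLUB_union_iff.2 hj
    · have := hgeo m a j hj
      have := hm m j hmj
      rw [Finset.card_insert_of_notMem haS]
      omega
  exact (hmj.not_ge (hmax hjP hmj.le)).elim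

def IsIndep (S : Finset (Atom rk)) : Prop :=
  ∃ l, IsLUB (Subtype.val '' (S : Set (Atom rk))) l ∧ rk l = S.card

theorem IsIndep.subset [DecidableEq L] (h0 : rk ⊥ = 0) (hgeo : RankSubmodular rk)
    {S T : Finset (Atom rk)} (hT : IsIndep T) (hST : S ⊆ T) : IsIndep S := by
  obtain ⟨m, hm, hrk⟩ := hT
  obtain ⟨l, hl⟩ := exists_isLUB_of_bddAbove
    ⟨m, upperBounds_mono_set (Set.image_mono (Finset.coe_subset.2 hST)) hm.1⟩
  rw [← Finset.union_sdiff_of_subset hST] at hm hrk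
  have := rank_le_add_card_of_isLUB_union hgeo hl hm
  have := rank_le_card_of_isLUB h0 hgeo hl
  rw [Finset.card_union_of_disjoint Finset.disjoint_sdiff] at hrk
  exact ⟨l, hl, by omega⟩

theorem not_isIndep_union [DecidableEq L] (h0 : rk ⊥ = 0) (hgeo : RankSubmodular rk)
    {S S' U : Finset (Atom rk)} {l : L} (hS : IsLUB (Subtype.val '' (S : Set (Atom rk))) l)
    (hS' : IsLUB (Subtype.val '' (S' : Set (Atom rk))) l) (hcard : S'.card ≤ S.card)
    (hSU : Disjoint S U) (hS'U : ¬ Disjoint S' U) : ¬ IsIndep (S ∪ U) := by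
  rintro ⟨m, hm, hrk⟩
  have := rank_le_card_of_isLUB h0 hgeo ((isLUB_image_union_congr hS hS').1 hm)
  have := Finset.card_union_add_card_inter S' U
  have := Finset.card_pos.2 (Finset.not_disjoint_iff_nonempty_inter.1 hS'U)
  rw [Finset.card_union_of_disjoint hSU] at hrk
  omega

end Lattice

section FaceRing

open ExteriorAlgebra

variable (R : Type*) [CommRing R] {L : Type*} [SemilatticeInf L] [DecidableEq L] {rk : L → ℕ}

open Classical in
noncomputable def wedgeNormalForm (rep : L → Finset (Atom rk)) (S : Finset (Atom rk)) :
    ExteriorAlgebra R (Atom rk → R) :=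
  if h : IsIndep S then wedge R (rep h.choose) else 0

variable (rk) in
def faceIdealGenerators : Set (ExteriorAlgebra R (Atom rk → R)) :=
  {x | ∃ S : Finset (Atom rk),
    (¬ ∃ l : L, IsLUB (Subtype.val '' (S : Set (Atom rk))) l) ∧ x = wedge R S} ∪
  {x | ∃ S : Finset (Atom rk),
    (∃ l : L, IsLUB (Subtype.val '' (S : Set (Atom rk))) l ∧ rk l ≠ S.card) ∧ x = wedge R S} ∪
  {x | ∃ S T : Finset (Atom rk), S ≠ T ∧
    (∃ l : L, IsLUB (Subtype.val '' (S : Set (Atom rk))) l ∧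
      IsLUB (Subtype.val '' (T : Set (Atom rk))) l ∧ rk l = S.card ∧ S.card = T.card) ∧
    x = wedge R S - wedge R T}

variable (rk) in
def faceIdeal : Submodule R (ExteriorAlgebra R (Atom rk → R)) :=
  Submodule.span R {x | ∃ g ∈ faceIdealGenerators R rk, ∃ w w' : ExteriorAlgebra R (Atom rk → R),
    x = w * g * w'}

variable {R} {rep : L → Finset (Atom rk)} {S T : Finset (Atom rk)} {l : L}

theorem wedgeNormalForm_of_isLUB (hS : IsLUB (Subtype.val '' (S : Set (Atom rk))) l)
    (hrk : rk l = S.card) : wedgeNormalForm R rep S = wedge R (rep l) := by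
  have h : IsIndep S := ⟨l, hS, hrk⟩
  rw [wedgeNormalForm, dif_pos h, h.choose_spec.1.unique hS]

theorem wedgeNormalForm_of_not_isIndep (h : ¬ IsIndep S) : wedgeNormalForm R rep S = 0 := by
  rw [wedgeNormalForm, dif_neg h]

theorem wedgeNormalForm_congr
    (hlub : ∀ m, IsLUB (Subtype.val '' (S : Set (Atom rk))) m ↔
      IsLUB (Subtype.val '' (T : Set (Atom rk))) m)
    (hcard : S.card = T.card) : wedgeNormalForm R rep S = wedgeNormalForm R rep T := by
  by_cases h : IsIndep S
  · obtain ⟨m, hm, hrk⟩ := h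
    rw [wedgeNormalForm_of_isLUB hm hrk, wedgeNormalForm_of_isLUB ((hlub m).1 hm) (hcard ▸ hrk)]
  · rw [wedgeNormalForm_of_not_isIndep h, wedgeNormalForm_of_not_isIndep
      fun ⟨m, hm, hrk⟩ => h ⟨m, (hlub m).2 hm, hcard ▸ hrk⟩]

theorem generator_mem_faceIdeal {g : ExteriorAlgebra R (Atom rk → R)}
    (hg : g ∈ faceIdealGenerators R rk) : g ∈ faceIdeal R rk :=
  Submodule.subset_span ⟨g, hg, 1, 1, by rw [one_mul, mul_one]⟩

theorem wedge_mem_faceIdeal_of_not_isIndep (h : ¬ IsIndep S) : wedge R S ∈ faceIdeal R rk := by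
  apply generator_mem_faceIdeal
  by_cases hS : ∃ l, IsLUB (Subtype.val '' (S : Set (Atom rk))) l
  · obtain ⟨l, hl⟩ := hS
    exact Or.inl (Or.inr ⟨S, ⟨l, hl, fun hrk => h ⟨l, hl, hrk⟩⟩, rfl⟩)
  · exact Or.inl (Or.inl ⟨S, hS, rfl⟩)

theorem wedge_sub_wedge_mem_faceIdeal (hS : IsLUB (Subtype.val '' (S : Set (Atom rk))) l)
    (hT : IsLUB (Subtype.val '' (T : Set (Atom rk))) l) (hSrk : rk l = S.card)
    (hTrk : rk l = T.card) : wedge R S - wedge R T ∈ faceIdeal R rk := by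
  obtain rfl | hST := eq_or_ne S T
  · rw [sub_self]
    exact zero_mem _
  · exact generator_mem_faceIdeal (Or.inr ⟨S, T, hST, ⟨l, hS, hT, hSrk, by omega⟩, rfl⟩)

variable [Finite L]

theorem map_mkQ_range_ι_pow_eq_span [CharP R 2]
    (hrep : ∀ l, IsLUB (Subtype.val '' (rep l : Set (Atom rk))) l ∧ (rep l).card = rk l) (i : ℕ) :
    (LinearMap.range (ι R : (Atom rk → R) →ₗ[R] _) ^ i).map (faceIdeal R rk).mkQ =
      Submodule.span R (Set.range fun l : {l : L | rk l = i} =>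
        (faceIdeal R rk).mkQ (wedge R (rep l))) := by
  rw [range_ι_pow_eq_span_wedge, Submodule.map_span, ← Set.image_comp]
  apply le_antisymm <;> rw [Submodule.span_le]
  · rintro _ ⟨S, hS : S.card = i, rfl⟩
    by_cases hind : IsIndep S
    · obtain ⟨l, hl, hrk⟩ := hind
      have : (faceIdeal R rk).mkQ (wedge R S) = (faceIdeal R rk).mkQ (wedge R (rep l)) :=
        (Submodule.Quotient.eq _).2
          (wedge_sub_wedge_mem_faceIdeal hl (hrep l).1 hrk (hrep l).2.symm)
      rw [Function.comp_apply, this]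
      exact Submodule.subset_span ⟨⟨l, hrk.trans hS⟩, rfl⟩
    · rw [Function.comp_apply, Submodule.mkQ_apply,
        (Submodule.Quotient.mk_eq_zero _).2 (wedge_mem_faceIdeal_of_not_isIndep hind)]
      exact zero_mem _
  · rintro _ ⟨⟨l, hl⟩, rfl⟩
    exact Submodule.subset_span ⟨rep l, (hrep l).2.trans hl, rfl⟩

variable [OrderBot L]

theorem wedgeNormalForm_union_eq_zero (h0 : rk ⊥ = 0) (hgeo : RankSubmodular rk)
    (h : ¬ IsIndep S) (U : Finset (Atom rk)) : wedgeNormalForm R rep (S ∪ U) = 0 :=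
  wedgeNormalForm_of_not_isIndep fun hSU => h (hSU.subset h0 hgeo Finset.subset_union_left)

theorem wedgeNormalForm_union_congr (h0 : rk ⊥ = 0) (hgeo : RankSubmodular rk)
    (hS : IsLUB (Subtype.val '' (S : Set (Atom rk))) l)
    (hT : IsLUB (Subtype.val '' (T : Set (Atom rk))) l) (hSrk : rk l = S.card)
    (hTrk : rk l = T.card) (U : Finset (Atom rk)) :
    (if Disjoint S U then wedgeNormalForm R rep (S ∪ U) else 0) =
      if Disjoint T U then wedgeNormalForm R rep (T ∪ U) else 0 := by
  have hcard : S.card = T.card := hSrk.symm.trans hTrk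
  by_cases hSU : Disjoint S U <;> by_cases hTU : Disjoint T U <;>
    simp only [hSU, hTU, if_true, if_false]
  · refine wedgeNormalForm_congr (fun m => isLUB_image_union_congr hS hT) ?_
    rw [Finset.card_union_of_disjoint hSU, Finset.card_union_of_disjoint hTU, hcard]
  · exact wedgeNormalForm_of_not_isIndep (not_isIndep_union h0 hgeo hS hT hcard.ge hSU hTU)
  · exact (wedgeNormalForm_of_not_isIndep (not_isIndep_union h0 hgeo hT hS hcard.le hTU hSU)).symm

theorem faceIdeal_le_ker [CharP R 2] (h0 : rk ⊥ = 0) (hgeo : RankSubmodular rk)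
    {Φ : ExteriorAlgebra R (Atom rk → R) →ₗ[R] ExteriorAlgebra R (Atom rk → R)}
    (hΦ : ∀ S, Φ (wedge R S) = wedgeNormalForm R rep S) : faceIdeal R rk ≤ LinearMap.ker Φ := by
  have hΦ_mul (S U : Finset (Atom rk)) :
      Φ (wedge R S * wedge R U) = if Disjoint S U then wedgeNormalForm R rep (S ∪ U) else 0 := by
    rw [wedge_mul_wedge, apply_ite Φ, hΦ, map_zero]
  have hΦ_mul_of_not_isIndep {S : Finset (Atom rk)} (h : ¬ IsIndep S) (U : Finset (Atom rk)) :
      Φ (wedge R S * wedge R U) = 0 := by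
    rw [hΦ_mul, wedgeNormalForm_union_eq_zero h0 hgeo h, ite_self]
  have hΦ_generator_mul (g) (hg : g ∈ faceIdealGenerators R rk) (U : Finset (Atom rk)) :
      Φ (g * wedge R U) = 0 := by
    rcases hg with (⟨S, hS, rfl⟩ | ⟨S, ⟨l, hl, hrk⟩, rfl⟩) | ⟨S, T, -, ⟨l, hS, hT, hrk, hcard⟩, rfl⟩
    · exact hΦ_mul_of_not_isIndep (fun ⟨l, hl, _⟩ => hS ⟨l, hl⟩) U
    · exact hΦ_mul_of_not_isIndep (fun ⟨l', hl', hrk'⟩ => hrk (hl.unique hl' ▸ hrk')) U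
    · rw [sub_mul, map_sub, hΦ_mul, hΦ_mul,
        wedgeNormalForm_union_congr h0 hgeo hS hT hrk (hcard ▸ hrk) U, sub_self]
  rw [faceIdeal, Submodule.span_le]
  rintro _ ⟨g, hg, w, w', rfl⟩
  rw [SetLike.mem_coe, LinearMap.mem_ker, (commute_of_charTwo w g).eq, mul_assoc]
  have : Φ ∘ₗ LinearMap.mulLeft R g = 0 :=
    (wedgeBasis R (Atom rk)).ext fun U => by simpa using hΦ_generator_mul g hg U
  exact LinearMap.congr_fun this (w * w')

theorem linearIndependent_mkQ_wedge_rep [CharP R 2] (h0 : rk ⊥ = 0) (hgeo : RankSubmodular rk)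
    (hrep : ∀ l, IsLUB (Subtype.val '' (rep l : Set (Atom rk))) l ∧ (rep l).card = rk l) :
    LinearIndependent R fun l => (faceIdeal R rk).mkQ (wedge R (rep l)) := by
  have hrep_inj : Function.Injective rep := fun l l' h => (hrep l).1.unique (h ▸ (hrep l').1)
  let Φ := (wedgeBasis R (Atom rk)).constr R (wedgeNormalForm R rep)
  have hΦ (S : Finset (Atom rk)) : Φ (wedge R S) = wedgeNormalForm R rep S := by
    simpa using (wedgeBasis R (Atom rk)).constr_basis R (wedgeNormalForm R rep) S
  refine LinearIndependent.mkQ_of_le_ker (f := Φ) ?_ (faceIdeal_le_ker h0 hgeo hΦ)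
  have hfix : Φ ∘ (fun l => wedge R (rep l)) = wedgeBasis R (Atom rk) ∘ rep :=
    funext fun l => by simp [hΦ, wedgeNormalForm_of_isLUB (hrep l).1 (hrep l).2.symm]
  rw [hfix]
  exact (wedgeBasis R _).linearIndependent.comp rep hrep_inj

end FaceRing

theorem exterior_face_ring_dims_general {L : Type*} [SemilatticeInf L] [OrderBot L]
    [Fintype L] [DecidableEq L]
    (rk : L → ℕ) (h0 : rk ⊥ = 0) (hm : RankStrictMono rk)
    (hat : AtomicRk rk)
    (hgeo : ∀ x y j : L, IsLUB ({x, y} : Set L) j →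
      rk (x ⊓ y) + rk j ≤ rk x + rk y)
    (k : Type*) [Field k] (hchar : ringChar k = 2) :
    ∀ i : ℕ,
      let A := {a : L // rk a = 1}
      let V := A → k
      -- `e S` is the wedge product of the basis vectors indexed by `S`
      let e : Finset A → ExteriorAlgebra k V := fun S =>
        (S.toList.map fun a => ExteriorAlgebra.ι k (Pi.single a (1 : k))).prod
      -- `jn S l` : the join of the atoms in `S` exists in `L` and equals `l`
      let jn : Finset A → L → Prop := fun S l =>
        IsLUB (Subtype.val '' (↑S : Set A)) l
      let gens : Set (ExteriorAlgebra k V) :=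
        {x | ∃ S : Finset A, (¬ ∃ l : L, jn S l) ∧ x = e S} ∪
        {x | ∃ S : Finset A, (∃ l : L, jn S l ∧ rk l ≠ S.card) ∧ x = e S} ∪
        {x | ∃ S T : Finset A, S ≠ T ∧
          (∃ l : L, jn S l ∧ jn T l ∧ rk l = S.card ∧ S.card = T.card) ∧
          x = e S - e T}
      -- the two-sided ideal generated by `gens`, as a `k`-subspace
      let I : Submodule k (ExteriorAlgebra k V) :=
        Submodule.span k
          {x | ∃ g ∈ gens, ∃ w w' : ExteriorAlgebra k V, x = w * g * w'}
      Module.finrank k (Submodule.map I.mkQ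
        ((LinearMap.range (ExteriorAlgebra.ι k : V →ₗ[k] ExteriorAlgebra k V)) ^ i)) =
        Nat.card {l : L | rk l = i} := by
  intro i
  have : CharP k 2 := ringChar.eq_iff.mp hchar
  choose rep hrep using exists_isLUB_card_eq_rank h0 hm hat hgeo
  show Module.finrank k ((LinearMap.range (ExteriorAlgebra.ι k) ^ i).map (faceIdeal k rk).mkQ) =
    Nat.card {l : L | rk l = i}
  rw [map_mkQ_range_ι_pow_eq_span hrep, finrank_span_eq_card, Nat.card_eq_fintype_card]
  exact (linearIndependent_mkQ_wedge_rep h0 hgeo hrep).comp _ Subtype.val_injective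

/-- The exterior face ring of a finite ranked atomic geometric meet semi-lattice
`L` over a field of characteristic 2: the quotient of the exterior algebra on the
vector space spanned by the atoms of `L` by the ideal `I_L = I₁ + I₂ + I₃` has
`i`-th graded component of dimension equal to the number of rank-`i` elements of
`L`. -/
theorem exterior_face_ring_dims {L : Type*} [SemilatticeInf L] [OrderBot L]
    [Fintype L] [DecidableEq L]
    (rk : L → ℕ) (h0 : rk ⊥ = 0) (hc : CoverRank rk) (hm : RankStrictMono rk)
    (hat : AtomicRk rk)
    (hgeo : ∀ x y j : L, IsLUB ({x, y} : Set L) j →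
      rk (x ⊓ y) + rk j ≤ rk x + rk y)
    (k : Type*) [Field k] (hchar : ringChar k = 2) :
    ∀ i : ℕ,
      let A := {a : L // rk a = 1}
      let V := A → k
      -- `e S` is the wedge product of the basis vectors indexed by `S`
      let e : Finset A → ExteriorAlgebra k V := fun S =>
        (S.toList.map fun a => ExteriorAlgebra.ι k (Pi.single a (1 : k))).prod
      -- `jn S l` : the join of the atoms in `S` exists in `L` and equals `l`
      let jn : Finset A → L → Prop := fun S l =>
        IsLUB (Subtype.val '' (↑S : Set A)) l
      let gens : Set (ExteriorAlgebra k V) :=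
        {x | ∃ S : Finset A, (¬ ∃ l : L, jn S l) ∧ x = e S} ∪
        {x | ∃ S : Finset A, (∃ l : L, jn S l ∧ rk l ≠ S.card) ∧ x = e S} ∪
        {x | ∃ S T : Finset A, S ≠ T ∧
          (∃ l : L, jn S l ∧ jn T l ∧ rk l = S.card ∧ S.card = T.card) ∧
          x = e S - e T}
      -- the two-sided ideal generated by `gens`, as a `k`-subspace
      let I : Submodule k (ExteriorAlgebra k V) :=
        Submodule.span k
          {x | ∃ g ∈ gens, ∃ w w' : ExteriorAlgebra k V, x = w * g * w'}
      Module.finrank k (Submodule.map I.mkQ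
        ((LinearMap.range (ExteriorAlgebra.ι k : V →ₗ[k] ExteriorAlgebra k V)) ^ i)) =
        Nat.card {l : L | rk l = i} :=
  exterior_face_ring_dims_general rk h0 hm hat hgeo k hchar
end
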